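/- arXiv:1106.5442 — 2 statements merged into one kernel-verified Lean document; each statement's English description precedes it below -/
import Mathlib

section
/- Let (X_n) be a nearest-neighbor path in Z^d with limsup_{n→∞} X_n·e_1/n > 0. Define, for 0 ≤ i < j, N_{i,j} as the number of visits to level i before first hitting level j, h_{i,l} as the time elapsed between the first and last visits to level i before hitting level i+l, H_{m,l} = Σ_{i=0}^{l-1} N_{m+i,m+l}/(i+1)^2, and E_{M,l}(a) = #{0 ≤ m ≤ M : h_{m,l} ≤ a and H_{m,l} ≤ a}/(M+1). Then sup_{a≥0} inf_{l≥1} limsup_{M→∞} E_{M,l}(a) > 0. -/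
open Filter

/-- first hitting time of level `i` (relative to the start of the path). -/
noncomputable def hitT (d : ℕ) (hd : 0 < d) (X : ℕ → Fin d → ℤ) (i : ℕ) : ℕ :=
  sInf {n : ℕ | X n ⟨0, hd⟩ = X 0 ⟨0, hd⟩ + (i : ℤ)}

/-- `N_{i,j}`: number of visits to level `i` before first hitting level `j`. -/
noncomputable def visitsN (d : ℕ) (hd : 0 < d) (X : ℕ → Fin d → ℤ) (i j : ℕ) : ℕ :=
  ((Finset.range (hitT d hd X j)).filter
    (fun n => X n ⟨0, hd⟩ = X 0 ⟨0, hd⟩ + (i : ℤ))).card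

/-- `h_{i,l}`: time between the first and the last visit to level `i`
before hitting level `i + l`. -/
noncomputable def smallh (d : ℕ) (hd : 0 < d) (X : ℕ → Fin d → ℤ) (i l : ℕ) : ℕ :=
  ((Finset.range (hitT d hd X (i + l))).filter
    (fun n => X n ⟨0, hd⟩ = X 0 ⟨0, hd⟩ + (i : ℤ))).sup id - hitT d hd X i

/-- `H_{m,l} = Σ_{i=0}^{l-1} N_{m+i,m+l}/(i+1)^2`. -/
noncomputable def bigH (d : ℕ) (hd : 0 < d) (X : ℕ → Fin d → ℤ) (m l : ℕ) : ℝ :=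
  ∑ i ∈ Finset.range l, (visitsN d hd X (m + i) (m + l) : ℝ) / ((i : ℝ) + 1) ^ 2

/-- `E_{M,l}(a) = #{0 ≤ m ≤ M : h_{m,l} ≤ a and H_{m,l} ≤ a}/(M+1)`. -/
noncomputable def EE (d : ℕ) (hd : 0 < d) (X : ℕ → Fin d → ℤ) (M l : ℕ) (a : ℝ) : ℝ :=
  ((@Finset.filter _
      (fun m => (smallh d hd X m l : ℝ) ≤ a ∧ bigH d hd X m l ≤ a)
      (Classical.decPred _) (Finset.range (M + 1))).card : ℝ) / ((M : ℝ) + 1)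

open Finset

section Aux

variable {d : ℕ} (hd : 0 < d) (X : ℕ → Fin d → ℤ)
  (hpath : ∀ n, ∑ j, |X (n + 1) j - X n j| = 1)
  (hlim : 0 < Filter.limsup
      (fun n : ℕ => ((X n ⟨0, hd⟩ - X 0 ⟨0, hd⟩ : ℤ) : ℝ) / (n : ℝ)) Filter.atTop)

include hpath

lemma step_bound (n : ℕ) : |X (n + 1) ⟨0, hd⟩ - X n ⟨0, hd⟩| ≤ 1 := by
  rw [← hpath n]
  exact Finset.single_le_sum (f := fun j => |X (n+1) j - X n j|)
    (fun j _ => abs_nonneg _) (Finset.mem_univ _)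

lemma dist_bound (n : ℕ) : |X n ⟨0, hd⟩ - X 0 ⟨0, hd⟩| ≤ (n : ℤ) := by
  induction n with
  | zero => simp
  | succ n ih =>
      have h1 := step_bound hd X hpath n
      have : X (n+1) ⟨0, hd⟩ - X 0 ⟨0, hd⟩ =
          (X (n+1) ⟨0, hd⟩ - X n ⟨0, hd⟩) + (X n ⟨0, hd⟩ - X 0 ⟨0, hd⟩) := by ring
      calc |X (n+1) ⟨0, hd⟩ - X 0 ⟨0, hd⟩| ≤ |X (n+1) ⟨0, hd⟩ - X n ⟨0, hd⟩| +
            |X n ⟨0, hd⟩ - X 0 ⟨0, hd⟩| := by rw [this]; exact abs_add_le _ _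
        _ ≤ 1 + n := add_le_add h1 ih
        _ = ((n+1 : ℕ) : ℤ) := by push_cast; ring

lemma ivt (n : ℕ) (i : ℤ) (h0 : X 0 ⟨0, hd⟩ ≤ i) (hn : i ≤ X n ⟨0, hd⟩) :
    ∃ m ≤ n, X m ⟨0, hd⟩ = i := by
  induction n with
  | zero => exact ⟨0, le_refl _, le_antisymm h0 hn⟩
  | succ n ih =>
      by_cases hc : i ≤ X n ⟨0, hd⟩
      · obtain ⟨m, hm, hm'⟩ := ih hc
        exact ⟨m, hm.trans (Nat.le_succ n), hm'⟩
      · push_neg at hc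
        have h1 := step_bound hd X hpath n
        have h2 : X (n+1) ⟨0, hd⟩ ≤ X n ⟨0, hd⟩ + 1 := by
          have := (abs_le.mp h1).2; omega
        exact ⟨n+1, le_refl _, by omega⟩

/-- the normalized displacement sequence -/
noncomputable abbrev useq : ℕ → ℝ :=
  fun n : ℕ => ((X n ⟨0, hd⟩ - X 0 ⟨0, hd⟩ : ℤ) : ℝ) / (n : ℝ)

lemma useq_bdd_below (n : ℕ) : (-1 : ℝ) ≤ useq hd X n := by
  rcases Nat.eq_zero_or_pos n with h | h
  · subst h; simp [useq]
  · have hb := dist_bound hd X hpath n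
    have h1 : ((-n : ℤ) : ℝ) ≤ ((X n ⟨0, hd⟩ - X 0 ⟨0, hd⟩ : ℤ) : ℝ) := by
      exact_mod_cast (abs_le.mp hb).1
    have hn : (0:ℝ) < n := by exact_mod_cast h
    rw [useq, le_div_iff₀ hn]
    calc (-1 : ℝ) * n = ((-n : ℤ) : ℝ) := by push_cast; ring
      _ ≤ _ := h1

lemma useq_bdd_above (n : ℕ) : useq hd X n ≤ 1 := by
  rcases Nat.eq_zero_or_pos n with h | h
  · subst h; simp [useq]
  · have hb := dist_bound hd X hpath n
    have h1 : ((X n ⟨0, hd⟩ - X 0 ⟨0, hd⟩ : ℤ) : ℝ) ≤ ((n : ℤ) : ℝ) := by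
      exact_mod_cast (abs_le.mp hb).2
    have hn : (0:ℝ) < n := by exact_mod_cast h
    rw [useq, div_le_iff₀ hn]
    calc ((X n ⟨0, hd⟩ - X 0 ⟨0, hd⟩ : ℤ) : ℝ) ≤ ((n:ℤ):ℝ) := h1
      _ = 1 * n := by push_cast; ring

include hlim

lemma reach (i : ℤ) : ∃ n, i ≤ X n ⟨0, hd⟩ := by
  by_contra hco
  push_neg at hco
  have hub : ∀ n : ℕ, 1 ≤ n → useq hd X n ≤ (|i| + |X 0 ⟨0,hd⟩| : ℝ) / n := by
    intro n hn
    have hXn : ((X n ⟨0, hd⟩ - X 0 ⟨0, hd⟩ : ℤ) : ℝ) ≤ ((|i| + |X 0 ⟨0,hd⟩| : ℤ) : ℝ) := by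
      have := hco n
      have h1 : X n ⟨0, hd⟩ - X 0 ⟨0, hd⟩ ≤ |i| + |X 0 ⟨0,hd⟩| := by
        have := le_abs_self i
        have := neg_abs_le (X 0 ⟨0,hd⟩)
        omega
      exact_mod_cast h1
    have hnp : (0:ℝ) < n := by exact_mod_cast hn
    rw [useq, div_le_div_iff₀ hnp hnp]
    have : ((|i| + |X 0 ⟨0,hd⟩| : ℤ) : ℝ) = (|i| + |X 0 ⟨0,hd⟩| : ℝ) := by push_cast; ring
    nlinarith [hXn]
  have htend : Tendsto (fun n : ℕ => (|i| + |X 0 ⟨0,hd⟩| : ℝ) / n) atTop (nhds 0) :=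
    tendsto_const_div_atTop_nhds_zero_nat _
  have hbdd : IsBoundedUnder (· ≤ ·) atTop (fun n : ℕ => (|i| + |X 0 ⟨0,hd⟩| : ℝ) / n) :=
    htend.isBoundedUnder_le
  have hcobdd : IsCoboundedUnder (· ≤ ·) atTop (useq hd X) := by
    refine IsBoundedUnder.isCoboundedUnder_le ⟨-1, ?_⟩
    exact Filter.eventually_map.mpr (Filter.Eventually.of_forall
      (fun n => useq_bdd_below hd X hpath n))
  have hls : limsup (useq hd X) atTop ≤
      limsup (fun n : ℕ => (|i| + |X 0 ⟨0,hd⟩| : ℝ) / n) atTop := by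
    refine limsup_le_limsup ?_ hcobdd hbdd
    filter_upwards [Filter.eventually_ge_atTop 1] with n hn using hub n hn
  rw [htend.limsup_eq] at hls
  exact absurd (lt_of_lt_of_le hlim hls) (lt_irrefl _)

lemma level_nonempty (i : ℕ) : {n : ℕ | X n ⟨0, hd⟩ = X 0 ⟨0, hd⟩ + (i : ℤ)}.Nonempty := by
  obtain ⟨n, hn⟩ := reach hd X hpath hlim (X 0 ⟨0, hd⟩ + (i : ℤ))
  obtain ⟨m, _, hm⟩ := ivt hd X hpath n (X 0 ⟨0, hd⟩ + (i : ℤ)) (by omega) hn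
  exact ⟨m, hm⟩

lemma hitT_spec (i : ℕ) : X (hitT d hd X i) ⟨0, hd⟩ = X 0 ⟨0, hd⟩ + (i : ℤ) :=
  Nat.sInf_mem (level_nonempty hd X hpath hlim i)

omit hlim

lemma hitT_le' {i n : ℕ} (h : X n ⟨0, hd⟩ = X 0 ⟨0, hd⟩ + (i : ℤ)) : hitT d hd X i ≤ n :=
  Nat.sInf_le h

include hlim

lemma hitT_mono {i j : ℕ} (hij : i ≤ j) : hitT d hd X i ≤ hitT d hd X j := by
  have hcast : (i:ℤ) ≤ (j:ℤ) := by exact_mod_cast hij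
  have hsp := hitT_spec hd X hpath hlim j
  obtain ⟨m, hm, hm'⟩ := ivt hd X hpath (hitT d hd X j) (X 0 ⟨0, hd⟩ + (i : ℤ))
    (by omega) (by omega)
  exact (hitT_le' hd X hpath hm').trans hm

lemma hitT_strictMono {i j : ℕ} (hij : i < j) : hitT d hd X i < hitT d hd X j := by
  refine lt_of_le_of_ne (hitT_mono hd X hpath hlim hij.le) (fun he => ?_)
  have h1 := hitT_spec hd X hpath hlim i
  have h2 := hitT_spec hd X hpath hlim j
  rw [he, h2] at h1
  have : (i:ℤ) = (j:ℤ) := by omega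
  exact absurd (by exact_mod_cast this) hij.ne

-- ================= chunk 3 : counting =================

/-- the finset of visits to level `i` before time `t` -/
noncomputable def VisF (i t : ℕ) : Finset ℕ :=
  (Finset.range t).filter (fun n => X n ⟨0, hd⟩ = X 0 ⟨0, hd⟩ + (i : ℤ))

omit hpath hlim

lemma visitsN_eq (i j : ℕ) : visitsN d hd X i j = (VisF hd X i (hitT d hd X j)).card := rfl

lemma VisF_mono (i : ℕ) {t t' : ℕ} (h : t ≤ t') : VisF hd X i t ⊆ VisF hd X i t' :=
  Finset.filter_subset_filter _ (Finset.range_subset_range.mpr h)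

/-- last visit to level `m` before hitting `m+l` -/
noncomputable def Es (m l : ℕ) : ℕ := (VisF hd X m (hitT d hd X (m + l))).sup id

lemma smallh_eq (m l : ℕ) : smallh d hd X m l = Es hd X m l - hitT d hd X m := rfl

include hpath hlim

lemma hitT_mem_VisF (m l : ℕ) (hl : 1 ≤ l) :
    hitT d hd X m ∈ VisF hd X m (hitT d hd X (m + l)) := by
  rw [VisF, Finset.mem_filter, Finset.mem_range]
  exact ⟨hitT_strictMono hd X hpath hlim (by omega), hitT_spec hd X hpath hlim m⟩

lemma VisF_nonempty (m l : ℕ) (hl : 1 ≤ l) :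
    (VisF hd X m (hitT d hd X (m + l))).Nonempty :=
  ⟨_, hitT_mem_VisF hd X hpath hlim m l hl⟩

lemma Es_mem (m l : ℕ) (hl : 1 ≤ l) :
    Es hd X m l ∈ VisF hd X m (hitT d hd X (m + l)) := by
  obtain ⟨b, hb, hb'⟩ := Finset.exists_mem_eq_sup _
    (VisF_nonempty hd X hpath hlim m l hl) (id : ℕ → ℕ)
  rw [Es, hb']; exact hb

lemma Es_lt (m l : ℕ) (hl : 1 ≤ l) : Es hd X m l < hitT d hd X (m + l) := by
  have := Es_mem hd X hpath hlim m l hl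
  rw [VisF, Finset.mem_filter, Finset.mem_range] at this
  exact this.1

lemma Es_level (m l : ℕ) (hl : 1 ≤ l) :
    X (Es hd X m l) ⟨0, hd⟩ = X 0 ⟨0, hd⟩ + (m : ℤ) := by
  have := Es_mem hd X hpath hlim m l hl
  rw [VisF, Finset.mem_filter] at this
  exact this.2

lemma Es_ge (m l : ℕ) (hl : 1 ≤ l) : hitT d hd X m ≤ Es hd X m l :=
  Finset.le_sup (f := id) (hitT_mem_VisF hd X hpath hlim m l hl)

lemma smallh_add (m l : ℕ) (hl : 1 ≤ l) :
    smallh d hd X m l + hitT d hd X m = Es hd X m l := by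
  rw [smallh_eq]
  exact Nat.sub_add_cancel (Es_ge hd X hpath hlim m l hl)

lemma smallh_mono (m : ℕ) {l l' : ℕ} (h : l ≤ l') : smallh d hd X m l ≤ smallh d hd X m l' := by
  rw [smallh_eq, smallh_eq]
  refine Nat.sub_le_sub_right ?_ _
  exact Finset.sup_mono (VisF_mono hd X m (hitT_mono hd X hpath hlim (by omega)))

lemma visitsN_mono (i : ℕ) {j j' : ℕ} (h : j ≤ j') : visitsN d hd X i j ≤ visitsN d hd X i j' := by
  rw [visitsN_eq, visitsN_eq]
  exact Finset.card_le_card (VisF_mono hd X i (hitT_mono hd X hpath hlim h))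

omit hpath hlim in
lemma bigH_nonneg (m l : ℕ) : 0 ≤ bigH d hd X m l := by
  refine Finset.sum_nonneg (fun i _ => ?_)
  positivity

lemma bigH_mono (m : ℕ) {l l' : ℕ} (h : l ≤ l') : bigH d hd X m l ≤ bigH d hd X m l' := by
  rw [bigH, bigH]
  calc ∑ i ∈ Finset.range l, (visitsN d hd X (m + i) (m + l) : ℝ) / ((i : ℝ) + 1) ^ 2
      ≤ ∑ i ∈ Finset.range l, (visitsN d hd X (m + i) (m + l') : ℝ) / ((i : ℝ) + 1) ^ 2 := by
        refine Finset.sum_le_sum (fun i _ => ?_)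
        have := visitsN_mono hd X hpath hlim (m + i) (Nat.add_le_add_left h m)
        have hc : ((visitsN d hd X (m + i) (m + l) : ℕ) : ℝ) ≤ (visitsN d hd X (m + i) (m + l') : ℝ) := by
          exact_mod_cast this
        apply div_le_div_of_nonneg_right hc ?_ |>.trans_eq rfl
        positivity
    _ ≤ ∑ i ∈ Finset.range l', (visitsN d hd X (m + i) (m + l') : ℝ) / ((i : ℝ) + 1) ^ 2 := by
        refine Finset.sum_le_sum_of_subset_of_nonneg
          (Finset.range_subset_range.mpr h) (fun i _ _ => by positivity)

omit hpath hlim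

lemma sum_visits_le (S : Finset ℕ) (φ : ℕ → ℕ)
    (hinj : ∀ m ∈ S, ∀ m' ∈ S, φ m = φ m' → m = m')
    (t : ℕ → ℕ) (T : ℕ) (ht : ∀ m ∈ S, t m ≤ T) :
    ∑ m ∈ S, (VisF hd X (φ m) (t m)).card ≤ T := by
  have hdisj : ∀ m ∈ S, ∀ m' ∈ S, m ≠ m' →
      Disjoint (VisF hd X (φ m) T) (VisF hd X (φ m') T) := by
    intro m hm m' hm' hne
    rw [Finset.disjoint_left]
    intro n hn hn'
    rw [VisF, Finset.mem_filter] at hn hn'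
    have : (φ m : ℤ) = (φ m' : ℤ) := by omega
    exact hne (hinj m hm m' hm' (by exact_mod_cast this))
  calc ∑ m ∈ S, (VisF hd X (φ m) (t m)).card
      ≤ ∑ m ∈ S, (VisF hd X (φ m) T).card :=
        Finset.sum_le_sum (fun m hm => Finset.card_le_card (VisF_mono hd X _ (ht m hm)))
    _ = (S.biUnion (fun m => VisF hd X (φ m) T)).card := (Finset.card_biUnion hdisj).symm
    _ ≤ (Finset.range T).card :=
        Finset.card_le_card (Finset.biUnion_subset.mpr (fun m _ => Finset.filter_subset _ _))
    _ = T := Finset.card_range T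

-- ================= chunk 4 : summed bounds =================

lemma invsq_sum_le (l : ℕ) : ∑ i ∈ Finset.range l, (1:ℝ)/((i:ℝ)+1)^2 ≤ 2 := by
  have key : ∀ n : ℕ, ∑ i ∈ Finset.range (n+1), (1:ℝ)/((i:ℝ)+1)^2 ≤ 2 - 1/((n:ℝ)+1) := by
    intro n
    induction n with
    | zero => norm_num
    | succ n ih =>
        rw [Finset.sum_range_succ]
        have hn : (0:ℝ) < (n:ℝ) + 1 := by positivity
        have hn2 : (0:ℝ) < (n:ℝ) + 2 := by positivity
        have : (1:ℝ)/(((n+1:ℕ):ℝ)+1)^2 ≤ 1/((n:ℝ)+1) - 1/((n:ℝ)+2) := by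
          push_cast
          rw [div_sub_div _ _ (ne_of_gt hn) (ne_of_gt hn2)]
          rw [div_le_div_iff₀ (by positivity) (by positivity)]
          ring_nf
          nlinarith
        have h2 : ((n+1:ℕ):ℝ) + 1 = (n:ℝ) + 2 := by push_cast; ring
        calc (∑ i ∈ Finset.range (n+1), (1:ℝ)/((i:ℝ)+1)^2) + (1:ℝ)/(((n+1:ℕ):ℝ)+1)^2
            ≤ (2 - 1/((n:ℝ)+1)) + (1/((n:ℝ)+1) - 1/((n:ℝ)+2)) := add_le_add ih this
          _ = 2 - 1/((n:ℝ)+2) := by ring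
          _ = 2 - 1/(((n+1:ℕ):ℝ)+1) := by rw [h2]
  cases l with
  | zero => simp
  | succ n =>
      refine (key n).trans ?_
      have : (0:ℝ) < 1/((n:ℝ)+1) := by positivity
      linarith

include hpath hlim

lemma sum_smallh_le (M l : ℕ) (hl : 1 ≤ l) :
    ∑ m ∈ Finset.range (M+1), smallh d hd X m l ≤ l * hitT d hd X (M + l) := by
  set T := hitT d hd X (M + l) with hT
  have hstep : ∀ m ∈ Finset.range (M+1),
      smallh d hd X m l =
      ∑ n ∈ Finset.range T, (if hitT d hd X m ≤ n ∧ n < Es hd X m l then 1 else 0) := by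
    intro m hm
    rw [Finset.mem_range] at hm
    have hEs : Es hd X m l < T :=
      lt_of_lt_of_le (Es_lt hd X hpath hlim m l hl)
        (hitT_mono hd X hpath hlim (by omega))
    rw [← Finset.card_filter]
    have heq : (Finset.range T).filter (fun n => hitT d hd X m ≤ n ∧ n < Es hd X m l)
        = Finset.Ico (hitT d hd X m) (Es hd X m l) := by
      ext n
      simp only [Finset.mem_filter, Finset.mem_range, Finset.mem_Ico]
      constructor
      · rintro ⟨_, h2⟩; exact h2
      · rintro ⟨h1, h2⟩; exact ⟨lt_trans h2 hEs, h1, h2⟩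
    rw [heq, Nat.card_Ico, smallh_eq]
  rw [Finset.sum_congr rfl hstep, Finset.sum_comm]
  have hinner : ∀ n ∈ Finset.range T,
      (∑ m ∈ Finset.range (M+1),
        if hitT d hd X m ≤ n ∧ n < Es hd X m l then 1 else 0) ≤ l := by
    intro n _
    rw [← Finset.card_filter]
    set F := (Finset.range (M+1)).filter
      (fun m => hitT d hd X m ≤ n ∧ n < Es hd X m l) with hF
    rcases Finset.eq_empty_or_nonempty F with he | hne
    · rw [he]; simpa using hl
    · have hmin := Finset.min'_mem F hne
      set m0 := F.min' hne with hm0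
      have hminf := hmin
      rw [hF, Finset.mem_filter] at hminf
      have hnEs : n < Es hd X m0 l := hminf.2.2
      have hnT : n < hitT d hd X (m0 + l) :=
        lt_trans hnEs (Es_lt hd X hpath hlim m0 l hl)
      have hsub : F ⊆ Finset.Ico m0 (m0 + l) := by
        intro m hm
        have h1 : m0 ≤ m := Finset.min'_le F m hm
        rw [hF, Finset.mem_filter] at hm
        rw [Finset.mem_Ico]
        refine ⟨h1, ?_⟩
        by_contra hcon
        push_neg at hcon
        have h3 : hitT d hd X (m0 + l) ≤ hitT d hd X m := hitT_mono hd X hpath hlim hcon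
        omega
      calc F.card ≤ (Finset.Ico m0 (m0+l)).card := Finset.card_le_card hsub
        _ = l := by rw [Nat.card_Ico]; omega
  calc ∑ n ∈ Finset.range T, (∑ m ∈ Finset.range (M+1),
        if hitT d hd X m ≤ n ∧ n < Es hd X m l then 1 else 0)
      ≤ ∑ _n ∈ Finset.range T, l := Finset.sum_le_sum hinner
    _ = T * l := by rw [Finset.sum_const, Finset.card_range, smul_eq_mul]
    _ = l * T := mul_comm _ _

lemma sum_visitsN_diag_le (M L : ℕ) :
    ∑ m ∈ Finset.range (M+1), visitsN d hd X m (m + L) ≤ hitT d hd X (M + L) := by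
  have := sum_visits_le hd X (Finset.range (M+1)) id (fun m _ m' _ h => h)
    (fun m => hitT d hd X (m + L)) (hitT d hd X (M + L))
    (fun m hm => hitT_mono hd X hpath hlim
      (by rw [Finset.mem_range] at hm; omega))
  simpa [visitsN_eq] using this

lemma sum_bigH_le (M l : ℕ) (hl : 1 ≤ l) :
    ∑ m ∈ Finset.range (M+1), bigH d hd X m l ≤ 2 * (hitT d hd X (M + 2*l) : ℝ) := by
  have hpt : ∀ m ∈ Finset.range (M+1), bigH d hd X m l ≤
      ∑ i ∈ Finset.range l, (visitsN d hd X (m + i) (m + i + l) : ℝ) / ((i : ℝ) + 1) ^ 2 := by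
    intro m _
    refine Finset.sum_le_sum (fun i _ => ?_)
    have h1 : visitsN d hd X (m + i) (m + l) ≤ visitsN d hd X (m + i) (m + i + l) :=
      visitsN_mono hd X hpath hlim _ (by omega)
    have h2 : ((visitsN d hd X (m + i) (m + l) : ℕ) : ℝ)
        ≤ ((visitsN d hd X (m + i) (m + i + l) : ℕ) : ℝ) := by exact_mod_cast h1
    exact div_le_div_of_nonneg_right h2 (by positivity) |>.trans_eq rfl
  calc ∑ m ∈ Finset.range (M+1), bigH d hd X m l
      ≤ ∑ m ∈ Finset.range (M+1), ∑ i ∈ Finset.range l,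
          (visitsN d hd X (m + i) (m + i + l) : ℝ) / ((i : ℝ) + 1) ^ 2 :=
        Finset.sum_le_sum hpt
    _ = ∑ i ∈ Finset.range l, ∑ m ∈ Finset.range (M+1),
          (visitsN d hd X (m + i) (m + i + l) : ℝ) / ((i : ℝ) + 1) ^ 2 := Finset.sum_comm
    _ ≤ ∑ i ∈ Finset.range l, (hitT d hd X (M + 2*l) : ℝ) * (1/((i:ℝ)+1)^2) := by
        refine Finset.sum_le_sum (fun i hi => ?_)
        rw [Finset.mem_range] at hi
        have hsum : ∑ m ∈ Finset.range (M+1), visitsN d hd X (m + i) (m + i + l)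
            ≤ hitT d hd X (M + 2*l) := by
          have := sum_visits_le hd X (Finset.range (M+1)) (fun m => m + i)
            (fun m _ m' _ h => by omega)
            (fun m => hitT d hd X (m + i + l)) (hitT d hd X (M + 2*l))
            (fun m hm => hitT_mono hd X hpath hlim
              (by rw [Finset.mem_range] at hm; omega))
          simpa [visitsN_eq] using this
        have hc : ((∑ m ∈ Finset.range (M+1), visitsN d hd X (m + i) (m + i + l) : ℕ) : ℝ)
            ≤ (hitT d hd X (M + 2*l) : ℝ) := by exact_mod_cast hsum
        calc ∑ m ∈ Finset.range (M+1),
              (visitsN d hd X (m + i) (m + i + l) : ℝ) / ((i : ℝ) + 1) ^ 2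
            = (∑ m ∈ Finset.range (M+1),
              (visitsN d hd X (m + i) (m + i + l) : ℝ)) * (1/((i:ℝ)+1)^2) := by
              rw [Finset.sum_mul]
              refine Finset.sum_congr rfl (fun m _ => ?_)
              ring
          _ ≤ (hitT d hd X (M + 2*l) : ℝ) * (1/((i:ℝ)+1)^2) := by
              refine mul_le_mul_of_nonneg_right ?_ (by positivity)
              rw [Nat.cast_sum] at hc
              exact hc
    _ = (hitT d hd X (M + 2*l) : ℝ) * ∑ i ∈ Finset.range l, (1/((i:ℝ)+1)^2) := by
        rw [Finset.mul_sum]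
    _ ≤ (hitT d hd X (M + 2*l) : ℝ) * 2 :=
        mul_le_mul_of_nonneg_left (invsq_sum_le l) (by positivity)
    _ = 2 * (hitT d hd X (M + 2*l) : ℝ) := mul_comm _ _

-- ================= chunk 5 : EE lemmas =================

omit hpath hlim

/-- the "good set" with a synthesizable decidability instance -/
noncomputable def GoodF (M l : ℕ) (a : ℝ) : Finset ℕ :=
  (Finset.range (M+1)).filter
    (fun m => (smallh d hd X m l : ℝ) ≤ a ∧ bigH d hd X m l ≤ a)

lemma EE_eq (M l : ℕ) (a : ℝ) :
    EE d hd X M l a = ((GoodF hd X M l a).card : ℝ) / ((M : ℝ) + 1) := by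
  rw [EE, GoodF]
  congr 3
  exact Finset.filter_congr_decidable (Finset.range (M+1))
    (fun m => (smallh d hd X m l : ℝ) ≤ a ∧ bigH d hd X m l ≤ a) (Classical.decPred _)

lemma EE_nonneg (M l : ℕ) (a : ℝ) : 0 ≤ EE d hd X M l a := by
  rw [EE_eq]; positivity

lemma EE_le_one (M l : ℕ) (a : ℝ) : EE d hd X M l a ≤ 1 := by
  rw [EE_eq, div_le_one (by positivity)]
  have h1 : (GoodF hd X M l a).card ≤ (Finset.range (M+1)).card :=
    Finset.card_le_card (Finset.filter_subset _ _)
  rw [Finset.card_range] at h1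
  calc ((GoodF hd X M l a).card : ℝ) ≤ ((M+1 : ℕ) : ℝ) := by exact_mod_cast h1
    _ = (M : ℝ) + 1 := by push_cast; ring

lemma EE_bddAbove (l : ℕ) (a : ℝ) :
    IsBoundedUnder (· ≤ ·) atTop (fun M : ℕ => EE d hd X M l a) :=
  ⟨1, Filter.eventually_map.mpr (Filter.Eventually.of_forall (fun M => EE_le_one hd X M l a))⟩

lemma EE_cobdd (l : ℕ) (a : ℝ) :
    IsCoboundedUnder (· ≤ ·) atTop (fun M : ℕ => EE d hd X M l a) := by
  refine IsBoundedUnder.isCoboundedUnder_le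
    ⟨0, Filter.eventually_map.mpr (Filter.Eventually.of_forall (fun M => EE_nonneg hd X M l a))⟩

lemma EE_limsup_nonneg (l : ℕ) (a : ℝ) :
    0 ≤ limsup (fun M : ℕ => EE d hd X M l a) atTop := by
  refine le_limsup_of_frequently_le ?_ (EE_bddAbove hd X l a)
  exact Filter.Frequently.of_forall (fun M => EE_nonneg hd X M l a)

lemma EE_limsup_le_one (l : ℕ) (a : ℝ) :
    limsup (fun M : ℕ => EE d hd X M l a) atTop ≤ 1 := by
  refine limsup_le_of_le (EE_cobdd hd X l a) ?_
  exact Filter.Eventually.of_forall (fun M => EE_le_one hd X M l a)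

include hpath hlim

lemma EE_anti (M : ℕ) {l l' : ℕ} (h : l ≤ l') (a : ℝ) :
    EE d hd X M l' a ≤ EE d hd X M l a := by
  rw [EE_eq, EE_eq]
  refine div_le_div_of_nonneg_right ?_ (by positivity) |>.trans_eq rfl
  have hsub : GoodF hd X M l' a ⊆ GoodF hd X M l a := by
    intro m hm
    rw [GoodF, Finset.mem_filter] at hm ⊢
    refine ⟨hm.1, ?_, ?_⟩
    · refine le_trans ?_ hm.2.1
      have := smallh_mono hd X hpath hlim m h
      exact_mod_cast this
    · exact le_trans (bigH_mono hd X hpath hlim m h) hm.2.2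
  exact_mod_cast Finset.card_le_card hsub

-- ================= chunk 6 : the linear-time subsequence =================

lemma get_c : ∃ c : ℝ, 0 < c ∧ ∀ N : ℕ, ∃ K : ℕ,
    N ≤ K ∧ ((hitT d hd X K : ℕ) : ℝ) ≤ c * K := by
  set u := fun n : ℕ => ((X n ⟨0, hd⟩ - X 0 ⟨0, hd⟩ : ℤ) : ℝ) / (n : ℝ) with hu
  have hv0 : 0 < limsup u atTop := hlim
  set v := limsup u atTop with hv
  have hcob : IsCoboundedUnder (· ≤ ·) atTop u :=
    IsBoundedUnder.isCoboundedUnder_le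
      ⟨-1, Filter.eventually_map.mpr
        (Filter.Eventually.of_forall (fun n => useq_bdd_below hd X hpath n))⟩
  have hfr : ∃ᶠ n in atTop, v/2 < u n := frequently_lt_of_lt_limsup hcob (by linarith)
  refine ⟨2/v, by positivity, ?_⟩
  intro N
  obtain ⟨n, hn1, hn2⟩ := (Filter.frequently_atTop.mp hfr) (max 1 ⌈((2*(N:ℝ)+2)/v)⌉₊)
  have hn_pos : 1 ≤ n := le_trans (le_max_left _ _) hn1
  have hnpos : (0:ℝ) < (n:ℝ) := by exact_mod_cast hn_pos
  have hnR : (2*(N:ℝ)+2)/v ≤ (n:ℝ) := by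
    have h1 : ⌈((2*(N:ℝ)+2)/v)⌉₊ ≤ n := le_trans (le_max_right _ _) hn1
    exact le_trans (Nat.le_ceil _) (by exact_mod_cast h1)
  have hYlow : v/2 * (n:ℝ) < ((X n ⟨0, hd⟩ - X 0 ⟨0, hd⟩ : ℤ) : ℝ) := by
    have := hn2
    rw [hu] at this
    calc v/2 * (n:ℝ) < (((X n ⟨0, hd⟩ - X 0 ⟨0, hd⟩ : ℤ) : ℝ)/(n:ℝ)) * n := by
          exact mul_lt_mul_of_pos_right this hnpos
      _ = _ := by field_simp
  have hYpos : (0:ℝ) < ((X n ⟨0, hd⟩ - X 0 ⟨0, hd⟩ : ℤ) : ℝ) := by nlinarith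
  have hY0 : (0:ℤ) ≤ X n ⟨0, hd⟩ - X 0 ⟨0, hd⟩ := by exact_mod_cast hYpos.le
  set K := (X n ⟨0, hd⟩ - X 0 ⟨0, hd⟩).toNat with hK
  have hKcast : ((K:ℕ):ℤ) = X n ⟨0, hd⟩ - X 0 ⟨0, hd⟩ := Int.toNat_of_nonneg hY0
  have hKR : ((K:ℕ):ℝ) = ((X n ⟨0, hd⟩ - X 0 ⟨0, hd⟩ : ℤ) : ℝ) := by
    exact_mod_cast congrArg (fun z : ℤ => (z:ℝ)) hKcast
  have hTn : hitT d hd X K ≤ n := by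
    refine hitT_le' hd X hpath ?_
    omega
  have hKN : N ≤ K := by
    have h2 : (N:ℝ) + 1 ≤ (K:ℝ) := by
      rw [hKR]
      have hle : (2*(N:ℝ)+2) ≤ v * n := by
        rw [div_le_iff₀ hv0] at hnR
        linarith [hnR]
      nlinarith
    have : (N:ℝ) ≤ (K:ℝ) := by linarith
    exact_mod_cast this
  refine ⟨K, hKN, ?_⟩
  have h3 : ((hitT d hd X K : ℕ) : ℝ) ≤ (n:ℝ) := by exact_mod_cast hTn
  have h4 : (n:ℝ) ≤ 2/v * K := by
    rw [hKR]
    have h5 : v * n < 2 * ((X n ⟨0, hd⟩ - X 0 ⟨0, hd⟩ : ℤ) : ℝ) := by nlinarith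
    rw [div_mul_eq_mul_div, le_div_iff₀ hv0]
    nlinarith
  linarith

end Aux

set_option maxHeartbeats 2000000 in
/-- for any nearest-neighbor path with `limsup Xₙ·e₁/n > 0`,
`sup_{a ≥ 0} inf_{l ≥ 1} limsup_{M → ∞} E_{M,l}(a) > 0`. -/
theorem stmt1 (d : ℕ) (hd : 0 < d) (X : ℕ → Fin d → ℤ)
    (hpath : ∀ n, ∑ j, |X (n + 1) j - X n j| = 1)
    (hlim : 0 < Filter.limsup
      (fun n : ℕ => ((X n ⟨0, hd⟩ - X 0 ⟨0, hd⟩ : ℤ) : ℝ) / (n : ℝ)) Filter.atTop) :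
    0 < ⨆ a : {a : ℝ // 0 ≤ a}, ⨅ l : {l : ℕ // 1 ≤ l},
      Filter.limsup (fun M : ℕ => EE d hd X M (l : ℕ) (a : ℝ)) Filter.atTop := by
  classical
  by_contra hcon
  rw [not_lt] at hcon
  obtain ⟨c, hc0, hfreq⟩ := get_c hd X hpath hlim
  set J : ℕ := ⌈4*c⌉₊ + 2 with hJdef
  have hJ2 : 2 ≤ J := by omega
  have hJR : 4*c + 2 ≤ (J:ℝ) := by
    have h := Nat.le_ceil (4*c)
    have : (J:ℝ) = (⌈4*c⌉₊ : ℝ) + 2 := by rw [hJdef]; push_cast; ring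
    linarith
  have hJRpos : (0:ℝ) < (J:ℝ) := by linarith
  set δ : ℝ := 1/(8*(J:ℝ)) with hδdef
  have hδ0 : 0 < δ := by rw [hδdef]; positivity
  -- from the negation: arbitrarily high scales with small limsup
  have hievent : ∀ (a : ℝ), 0 ≤ a → ∀ l₀ : ℕ, ∃ l : ℕ, l₀ + 1 ≤ l ∧
      Filter.limsup (fun M : ℕ => EE d hd X M l a) Filter.atTop < δ := by
    intro a ha l₀
    have hbddF : BddAbove (Set.range (fun p : {a : ℝ // 0 ≤ a} => ⨅ l : {l : ℕ // 1 ≤ l},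
        Filter.limsup (fun M : ℕ => EE d hd X M (l:ℕ) (p:ℝ)) Filter.atTop)) := by
      refine ⟨1, ?_⟩
      rintro y ⟨p, rfl⟩
      refine ciInf_le_of_le ?_ ⟨1, le_refl 1⟩ (EE_limsup_le_one hd X 1 p)
      exact ⟨0, by rintro z ⟨q, rfl⟩; exact EE_limsup_nonneg hd X q p⟩
    have h0 : (⨅ l : {l : ℕ // 1 ≤ l},
        Filter.limsup (fun M : ℕ => EE d hd X M (l:ℕ) a) Filter.atTop) ≤ 0 :=
      le_trans (le_ciSup hbddF ⟨a, ha⟩) hcon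
    obtain ⟨l₁, hl₁⟩ := exists_lt_of_ciInf_lt (lt_of_le_of_lt h0 hδ0)
    refine ⟨max (l₁ : ℕ) (l₀ + 1), le_max_right _ _, ?_⟩
    refine lt_of_le_of_lt ?_ hl₁
    exact Filter.limsup_le_limsup (Filter.Eventually.of_forall
        (fun M => EE_anti hd X hpath hlim M (le_max_left _ _) a))
      (EE_cobdd hd X _ a) (EE_bddAbove hd X _ a)
  set A : ℕ → ℝ := fun t => 64*c*(J:ℝ)*((t:ℝ)+1) with hA
  have hA0 : ∀ t, 0 ≤ A t := fun t => by rw [hA]; positivity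
  have hA64 : ∀ t, 64*c*(J:ℝ) ≤ A t := by
    intro t
    have hAt : A t = 64*c*(J:ℝ)*((t:ℝ)+1) := rfl
    rw [hAt]
    have h1 : (1:ℝ) ≤ (t:ℝ)+1 := by have := Nat.cast_nonneg (α := ℝ) t; linarith
    nlinarith [mul_nonneg (mul_nonneg (by norm_num : (0:ℝ) ≤ 64) hc0.le) hJRpos.le]
  have hchoice : ∀ l₀ : ℕ, ∃ l, l₀ + 1 ≤ l ∧
      Filter.limsup (fun M : ℕ => EE d hd X M l (A l₀)) Filter.atTop < δ :=
    fun l₀ => hievent (A l₀) (hA0 l₀) l₀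
  choose g hg1 hg2 using hchoice
  set L : ℕ → ℕ := fun j => g^[j] 0 with hLdef
  have hLsucc : ∀ j, L (j+1) = g (L j) := by
    intro j
    rw [hLdef]
    exact Function.iterate_succ_apply' g j 0
  have hLlt : ∀ j, L j < L (j+1) := by
    intro j
    rw [hLsucc]
    exact lt_of_lt_of_le (Nat.lt_succ_self _) (hg1 (L j))
  have hLmono : StrictMono L := strictMono_nat_of_lt_succ hLlt
  have hL1' : ∀ j, 1 ≤ L (j+1) := fun j => by have := hLlt j; omega
  have hEEj : ∀ j, Filter.limsup
      (fun M : ℕ => EE d hd X M (L (j+1)) (A (L j))) Filter.atTop < δ := by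
    intro j
    rw [hLsucc]
    exact hg2 (L j)
  have hev : ∀ᶠ M in Filter.atTop, ∀ j ∈ Finset.range J,
      EE d hd X M (L (j+1)) (A (L j)) < δ := by
    rw [Filter.eventually_all_finset]
    exact fun j _ => Filter.eventually_lt_of_limsup_lt (hEEj j) (EE_bddAbove hd X _ _)
  obtain ⟨N₀, hN₀⟩ := Filter.eventually_atTop.mp hev
  obtain ⟨K, hKge, hKbd⟩ := hfreq (N₀ + 4 * L J + 4)
  set M := K - 2 * L J with hMdef
  have hKM : K = M + 2 * L J := by omega
  have hMN₀ : N₀ ≤ M := by omega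
  have hM2L : 2 * L J ≤ M := by omega
  have hMpos : (0:ℝ) < (M:ℝ) + 1 := by positivity
  have hTbound : ∀ t : ℕ, t ≤ K → ((hitT d hd X t : ℕ):ℝ) ≤ 2*c*((M:ℝ)+1) := by
    intro t ht
    have h1 : hitT d hd X t ≤ hitT d hd X K := hitT_mono hd X hpath hlim ht
    have h2 : ((hitT d hd X t : ℕ):ℝ) ≤ ((hitT d hd X K : ℕ):ℝ) := by exact_mod_cast h1
    have h3 : (K:ℝ) ≤ 2*((M:ℝ)+1) := by
      have h4 : (K:ℕ) ≤ 2*M+2 := by omega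
      have h5 : ((K:ℕ):ℝ) ≤ ((2*M+2 : ℕ):ℝ) := by exact_mod_cast h4
      push_cast at h5
      linarith
    calc ((hitT d hd X t : ℕ):ℝ) ≤ ((hitT d hd X K : ℕ):ℝ) := h2
      _ ≤ c*K := hKbd
      _ ≤ c*(2*((M:ℝ)+1)) := by nlinarith
      _ = 2*c*((M:ℝ)+1) := by ring
  -- bad sets
  set Gd : ℕ → Finset ℕ := fun j => GoodF hd X M (L (j+1)) (A (L j)) with hGd
  set HB : ℕ → Finset ℕ := fun j => (Finset.range (M+1)).filter
    (fun m => A (L j) < bigH d hd X m (L (j+1))) with hHB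
  set hB : ℕ → Finset ℕ := fun j => (Finset.range (M+1)).filter
    (fun m => A (L (j+1)) < (smallh d hd X m (L (j+1)) : ℝ)) with hhB
  have hGd_bd : ∀ j, j < J → ((Gd j).card : ℝ) < ((M:ℝ)+1)/(8*(J:ℝ)) := by
    intro j hj
    have h1 := hN₀ M hMN₀ j (Finset.mem_range.mpr hj)
    rw [EE_eq, div_lt_iff₀ hMpos] at h1
    calc ((Gd j).card : ℝ) = ((GoodF hd X M (L (j+1)) (A (L j))).card : ℝ) := by rw [hGd]
      _ < δ * ((M:ℝ)+1) := h1
      _ = ((M:ℝ)+1)/(8*(J:ℝ)) := by rw [hδdef]; field_simp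
  have hHB_bd : ∀ j, j < J → ((HB j).card : ℝ) ≤ ((M:ℝ)+1)/(8*(J:ℝ)) := by
    intro j hj
    have hmark : ((HB j).card) • (A (L j)) ≤ ∑ m ∈ HB j, bigH d hd X m (L (j+1)) := by
      refine Finset.card_nsmul_le_sum _ _ _ (fun m hm => ?_)
      rw [hHB, Finset.mem_filter] at hm
      exact le_of_lt hm.2
    have hsub : ∑ m ∈ HB j, bigH d hd X m (L (j+1)) ≤
        ∑ m ∈ Finset.range (M+1), bigH d hd X m (L (j+1)) := by
      refine Finset.sum_le_sum_of_subset_of_nonneg ?_ (fun m _ _ => bigH_nonneg hd X m _)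
      rw [hHB]
      exact Finset.filter_subset _ _
    have hSum := sum_bigH_le hd X hpath hlim M (L (j+1)) (hL1' j)
    have hLle : L (j+1) ≤ L J := hLmono.monotone (by omega)
    have hT := hTbound (M + 2 * L (j+1)) (by omega)
    have h1 : ((HB j).card : ℝ) * (A (L j)) ≤ 4*c*((M:ℝ)+1) := by
      rw [nsmul_eq_mul] at hmark
      nlinarith
    have h2 : ((HB j).card : ℝ) * (64*c*(J:ℝ)) ≤ 4*c*((M:ℝ)+1) :=
      le_trans (mul_le_mul_of_nonneg_left (hA64 (L j)) (Nat.cast_nonneg _)) h1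
    rw [le_div_iff₀ (by positivity)]
    nlinarith [Nat.cast_nonneg (α := ℝ) (HB j).card]
  have hhB_bd : ∀ j, j < J → ((hB j).card : ℝ) ≤ ((M:ℝ)+1)/(8*(J:ℝ)) := by
    intro j hj
    have hmark : ((hB j).card) • (A (L (j+1))) ≤
        ∑ m ∈ hB j, (smallh d hd X m (L (j+1)) : ℝ) := by
      refine Finset.card_nsmul_le_sum _ _ _ (fun m hm => ?_)
      rw [hhB, Finset.mem_filter] at hm
      exact le_of_lt hm.2
    have hsub : ∑ m ∈ hB j, (smallh d hd X m (L (j+1)) : ℝ) ≤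
        ∑ m ∈ Finset.range (M+1), (smallh d hd X m (L (j+1)) : ℝ) := by
      refine Finset.sum_le_sum_of_subset_of_nonneg ?_
        (fun m _ _ => by positivity)
      rw [hhB]
      exact Finset.filter_subset _ _
    have hSum0 := sum_smallh_le hd X hpath hlim M (L (j+1)) (hL1' j)
    have hLle : L (j+1) ≤ L J := hLmono.monotone (by omega)
    have hT := hTbound (M + L (j+1)) (by omega)
    have hSum : ∑ m ∈ Finset.range (M+1), (smallh d hd X m (L (j+1)) : ℝ) ≤
        ((L (j+1)):ℝ) * (2*c*((M:ℝ)+1)) := by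
      have hc1 : (∑ m ∈ Finset.range (M+1), (smallh d hd X m (L (j+1)) : ℝ)) =
          ((∑ m ∈ Finset.range (M+1), smallh d hd X m (L (j+1)) : ℕ) : ℝ) := by
        rw [Nat.cast_sum]
      rw [hc1]
      have hc2 : ((∑ m ∈ Finset.range (M+1), smallh d hd X m (L (j+1)) : ℕ) : ℝ) ≤
          (((L (j+1)) * hitT d hd X (M + L (j+1)) : ℕ) : ℝ) := by exact_mod_cast hSum0
      refine le_trans hc2 ?_
      push_cast
      have := Nat.cast_nonneg (α := ℝ) (L (j+1))
      nlinarith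
    have h1 : ((hB j).card : ℝ) * (A (L (j+1))) ≤ ((L (j+1)):ℝ) * (2*c*((M:ℝ)+1)) := by
      rw [nsmul_eq_mul] at hmark
      linarith
    have hy1 : (0:ℝ) < ((L (j+1)):ℝ) + 1 := by positivity
    have h2 : (((hB j).card : ℝ) * (64*(J:ℝ))) * (c*(((L (j+1)):ℝ)+1)) ≤
        (2*((M:ℝ)+1)) * (c*(((L (j+1)):ℝ)+1)) := by
      have hAexp : A (L (j+1)) = 64*c*(J:ℝ)*(((L (j+1)):ℝ)+1) := by rw [hA]
      have hLlep : ((L (j+1)):ℝ) ≤ ((L (j+1)):ℝ) + 1 := by linarith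
      nlinarith [h1, Nat.cast_nonneg (α := ℝ) (hB j).card, hc0, hJRpos,
        Nat.cast_nonneg (α := ℝ) (L (j+1)), hMpos]
    have h3 : ((hB j).card : ℝ) * (64*(J:ℝ)) ≤ 2*((M:ℝ)+1) :=
      le_of_mul_le_mul_right h2 (by positivity)
    rw [le_div_iff₀ (by positivity)]
    nlinarith [Nat.cast_nonneg (α := ℝ) (hB j).card, hJRpos]
  -- the core
  set B : Finset ℕ := (Finset.range J).biUnion (fun j => (Gd j ∪ HB j) ∪ hB j) with hBdef
  have hBcard : (B.card : ℝ) ≤ (3/8)*((M:ℝ)+1) := by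
    have h1 : B.card ≤ ∑ j ∈ Finset.range J, ((Gd j ∪ HB j) ∪ hB j).card :=
      Finset.card_biUnion_le
    have h2 : ∀ j ∈ Finset.range J, (((Gd j ∪ HB j) ∪ hB j).card : ℝ) ≤
        3*(((M:ℝ)+1)/(8*(J:ℝ))) := by
      intro j hj
      rw [Finset.mem_range] at hj
      have u1 : ((Gd j ∪ HB j) ∪ hB j).card ≤ (Gd j ∪ HB j).card + (hB j).card :=
        Finset.card_union_le _ _
      have u2 : (Gd j ∪ HB j).card ≤ (Gd j).card + (HB j).card := Finset.card_union_le _ _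
      have c1 := hGd_bd j hj
      have c2 := hHB_bd j hj
      have c3 := hhB_bd j hj
      have u3 : (((Gd j ∪ HB j) ∪ hB j).card : ℝ) ≤
          ((Gd j).card : ℝ) + ((HB j).card : ℝ) + ((hB j).card : ℝ) := by
        have : ((Gd j ∪ HB j) ∪ hB j).card ≤ (Gd j).card + (HB j).card + (hB j).card := by omega
        exact_mod_cast this
      linarith
    calc (B.card : ℝ) ≤ ((∑ j ∈ Finset.range J, ((Gd j ∪ HB j) ∪ hB j).card : ℕ) : ℝ) := by
          exact_mod_cast h1
      _ = ∑ j ∈ Finset.range J, (((Gd j ∪ HB j) ∪ hB j).card : ℝ) := by rw [Nat.cast_sum]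
      _ ≤ ∑ _j ∈ Finset.range J, 3*(((M:ℝ)+1)/(8*(J:ℝ))) := Finset.sum_le_sum h2
      _ = (J:ℝ) * (3*(((M:ℝ)+1)/(8*(J:ℝ)))) := by
          rw [Finset.sum_const, Finset.card_range, nsmul_eq_mul]
      _ = (3/8)*((M:ℝ)+1) := by field_simp
  set CORE : Finset ℕ := Finset.range (M+1) \ B with hCORE
  have hCOREcard : ((M:ℝ)+1)/2 ≤ (CORE.card : ℝ) := by
    have h1 : (Finset.range (M+1)).card ≤ CORE.card + B.card :=
      Finset.card_le_card_sdiff_add_card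
    rw [Finset.card_range] at h1
    have h2 : ((M:ℝ)+1) ≤ (CORE.card : ℝ) + (B.card : ℝ) := by
      have : ((M+1 : ℕ):ℝ) ≤ ((CORE.card + B.card : ℕ):ℝ) := by exact_mod_cast h1
      push_cast at this
      linarith
    linarith
  -- each core point is visited J-1 times
  have hvisits : ∀ m ∈ CORE, J - 1 ≤ visitsN d hd X m (m + L J) := by
    intro m hm
    rw [hCORE, Finset.mem_sdiff] at hm
    obtain ⟨hmr, hmb⟩ := hm
    have hnot : ∀ j, j < J → m ∉ (Gd j ∪ HB j) ∪ hB j := by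
      intro j hj hmem
      rw [hBdef] at hmb
      exact hmb (Finset.mem_biUnion.mpr ⟨j, Finset.mem_range.mpr hj, hmem⟩)
    have hC : ∀ j, j < J → A (L j) < (smallh d hd X m (L (j+1)) : ℝ) ∧
        (smallh d hd X m (L (j+1)) : ℝ) ≤ A (L (j+1)) := by
      intro j hj
      have h := hnot j hj
      rw [Finset.mem_union, Finset.mem_union] at h
      push_neg at h
      obtain ⟨⟨h1, h2⟩, h3⟩ := h
      have hbig : bigH d hd X m (L (j+1)) ≤ A (L j) := by
        by_contra hbig
        refine h2 ?_
        rw [hHB]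
        exact Finset.mem_filter.mpr ⟨hmr, not_le.mp hbig⟩
      have hsm : A (L j) < (smallh d hd X m (L (j+1)) : ℝ) := by
        by_contra hsm
        refine h1 ?_
        rw [hGd]
        exact Finset.mem_filter.mpr ⟨hmr, ⟨not_lt.mp hsm, hbig⟩⟩
      have hsmle : (smallh d hd X m (L (j+1)) : ℝ) ≤ A (L (j+1)) := by
        by_contra hx
        refine h3 ?_
        rw [hhB]
        exact Finset.mem_filter.mpr ⟨hmr, not_le.mp hx⟩
      exact ⟨hsm, hsmle⟩
    have hwin : ∀ j, j + 2 ≤ J →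
        hitT d hd X (m + L (j+1)) ≤ Es hd X m (L (j+2)) ∧
        Es hd X m (L (j+2)) < hitT d hd X (m + L (j+2)) := by
      intro j hj
      have hLl2 : 1 ≤ L (j+2) := hL1' (j+1)
      refine ⟨?_, Es_lt hd X hpath hlim m _ hLl2⟩
      by_contra hcon2
      push_neg at hcon2
      have hmem : Es hd X m (L (j+2)) ∈ VisF hd X m (hitT d hd X (m + L (j+1))) := by
        rw [VisF, Finset.mem_filter, Finset.mem_range]
        exact ⟨hcon2, Es_level hd X hpath hlim m _ hLl2⟩
      have hle : Es hd X m (L (j+2)) ≤ Es hd X m (L (j+1)) :=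
        Finset.le_sup (f := id) hmem
      have e2 := smallh_add hd X hpath hlim m (L (j+2)) hLl2
      have e1 := smallh_add hd X hpath hlim m (L (j+1)) (hL1' j)
      have hns : smallh d hd X m (L (j+2)) ≤ smallh d hd X m (L (j+1)) := by omega
      have hc1 := (hC (j+1) (by omega)).1
      have hc2 := (hC j (by omega)).2
      have hcast : (smallh d hd X m (L (j+2)) : ℝ) ≤ (smallh d hd X m (L (j+1)) : ℝ) := by
        exact_mod_cast hns
      rw [hLsucc (j+1)] at hc1
      rw [← hLsucc (j+1)] at hc1
      linarith
    have hmapsto : ∀ j, j + 2 ≤ J →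
        Es hd X m (L (j+2)) ∈ VisF hd X m (hitT d hd X (m + L J)) := by
      intro j hj
      rw [VisF, Finset.mem_filter, Finset.mem_range]
      have h2 := (hwin j hj).2
      have h3 : hitT d hd X (m + L (j+2)) ≤ hitT d hd X (m + L J) :=
        hitT_mono hd X hpath hlim (Nat.add_le_add_left (hLmono.monotone (by omega)) m)
      exact ⟨lt_of_lt_of_le h2 h3, Es_level hd X hpath hlim m _ (hL1' (j+1))⟩
    have hstrict : ∀ j j', j < j' → j' + 2 ≤ J →
        Es hd X m (L (j+2)) < Es hd X m (L (j'+2)) := by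
      intro j j' hjj hj'
      have h1 := (hwin j (by omega)).2
      have h2 := (hwin j' hj').1
      have h3 : hitT d hd X (m + L (j+2)) ≤ hitT d hd X (m + L (j'+1)) :=
        hitT_mono hd X hpath hlim (Nat.add_le_add_left (hLmono.monotone (by omega)) m)
      omega
    have hcard : J - 1 ≤ (VisF hd X m (hitT d hd X (m + L J))).card := by
      have hinj := Finset.card_le_card_of_injOn (f := fun j => Es hd X m (L (j+2)))
        (s := Finset.range (J-1)) (t := VisF hd X m (hitT d hd X (m + L J)))
        (fun j hj => hmapsto j (by rw [Finset.mem_coe, Finset.mem_range] at hj; omega))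
        (fun j hj j' hj' he => by
          rw [Finset.mem_coe, Finset.mem_range] at hj hj'
          rcases lt_trichotomy j j' with h | h | h
          · exact absurd he (ne_of_lt (hstrict j j' h (by omega)))
          · exact h
          · exact absurd he.symm (ne_of_lt (hstrict j' j h (by omega))))
      rw [Finset.card_range] at hinj
      exact hinj
    have hVeq : visitsN d hd X m (m + L J) = (VisF hd X m (hitT d hd X (m + L J))).card :=
      visitsN_eq hd X m (m + L J)
    omega
  -- final counting contradiction
  have hlow : CORE.card * (J - 1) ≤ ∑ m ∈ Finset.range (M+1), visitsN d hd X m (m + L J) := by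
    calc CORE.card * (J-1) = CORE.card • (J-1) := by rw [smul_eq_mul]
      _ ≤ ∑ m ∈ CORE, visitsN d hd X m (m + L J) :=
          Finset.card_nsmul_le_sum _ _ _ hvisits
      _ ≤ ∑ m ∈ Finset.range (M+1), visitsN d hd X m (m + L J) := by
          refine Finset.sum_le_sum_of_subset ?_
          rw [hCORE]
          exact Finset.sdiff_subset
  have hup := sum_visitsN_diag_le hd X hpath hlim M (L J)
  have hupK : ((hitT d hd X (M + L J) : ℕ):ℝ) ≤ 2*c*((M:ℝ)+1) := hTbound _ (by omega)
  have hcast : ((CORE.card : ℝ)) * (((J:ℝ) - 1)) ≤ 2*c*((M:ℝ)+1) := by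
    have hle := le_trans hlow hup
    have h1 : ((CORE.card * (J-1) : ℕ) : ℝ) ≤ ((hitT d hd X (M + L J) : ℕ):ℝ) := by
      exact_mod_cast hle
    have h2 : ((CORE.card * (J-1) : ℕ) : ℝ) = (CORE.card : ℝ) * (((J:ℝ)) - 1) := by
      have hJ1 : 1 ≤ J := by omega
      push_cast [Nat.cast_sub hJ1]
      ring
    rw [h2] at h1
    linarith
  have hJ1pos : (0:ℝ) ≤ (J:ℝ) - 1 := by linarith
  nlinarith [hCOREcard, hcast, hMpos, hJR, hc0]
end

section
/- Let (X_i)_{i≥1} be nonnegative random variables and μ a probability measure on [0,∞) with finite mean m_μ, such that the conditional law of X_{i+1} given the past has density ≤ b with respect to μ for a constant b ≥ 1. Let (Δ̃_i) be iid Bernoulli(1 − b^{-1}) random variables, each Δ̃_i independent of all X_n. Set Y_i = (1 − b^{-1} − Δ̃_i) X_i 1_{X_i ≤ i}. Then (Σ_{i=1}^n Y_i/i)_n is an L^2-bounded martingale, with E(Σ_{i=1}^n Y_i/i)^2 ≤ C m_μ for a constant C depending only on b; consequently lim_{n→∞} (1/n) Σ_{i=1}^n Y_i = 0 almost surely. 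-/
open MeasureTheory ProbabilityTheory Filter MeasurableSpace
open scoped ENNReal NNReal

/-- `Y_i = (1 - b⁻¹ - Δ̃_i) X_i 1_{X_i ≤ i}`. -/
noncomputable def Ysix {Ω : Type*} (X : ℕ → Ω → ℝ) (Δ : ℕ → Ω → Bool) (b : ℝ)
    (i : ℕ) (ω : Ω) : ℝ :=
  (1 - b⁻¹ - (if Δ i ω then 1 else 0)) * X i ω * (if X i ω ≤ (i : ℝ) then 1 else 0)

/-- `S_n = Σ_{i=1}^n Y_i / i`. -/
noncomputable def Ssix {Ω : Type*} (X : ℕ → Ω → ℝ) (Δ : ℕ → Ω → Bool) (b : ℝ)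
    (n : ℕ) (ω : Ω) : ℝ :=
  ∑ i ∈ Finset.Icc 1 n, Ysix X Δ b i ω / (i : ℝ)

/-- `𝒢_n = σ(X_1,…,X_n, Δ̃_1,…,Δ̃_n)`. -/
def Gsix {Ω : Type*} [MeasurableSpace Ω] (X : ℕ → Ω → ℝ) (Δ : ℕ → Ω → Bool)
    (n : ℕ) : MeasurableSpace Ω :=
  (⨆ i : Fin n, MeasurableSpace.comap (X ((i : ℕ) + 1)) inferInstance) ⊔
    (⨆ i : Fin n, MeasurableSpace.comap (Δ ((i : ℕ) + 1)) inferInstance)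


-- HELPERS

/-- Kronecker's lemma in the form we need. -/
lemma kronecker_aux (a : ℕ → ℝ) (L : ℝ)
    (h : Tendsto (fun n => ∑ i ∈ Finset.Icc 1 n, a i / i) atTop (nhds L)) :
    Tendsto (fun n : ℕ => (∑ i ∈ Finset.Icc 1 n, a i) / (n : ℝ)) atTop (nhds 0) := by
  set s : ℕ → ℝ := fun n => ∑ i ∈ Finset.Icc 1 n, a i / i with hs
  have key : ∀ n, (∑ i ∈ Finset.Icc 1 n, a i)
      = n * s n - ∑ i ∈ Finset.range n, s i := by
    intro n
    induction n with
    | zero => simp [s]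
    | succ n ih =>
      have h1 : s (n + 1) = s n + a (n + 1) / (n + 1) := by
        simp [hs, Finset.sum_Icc_succ_top (Nat.le_add_left 1 n)]
      have h2 : ∑ i ∈ Finset.Icc 1 (n + 1), a i
          = (∑ i ∈ Finset.Icc 1 n, a i) + a (n + 1) :=
        Finset.sum_Icc_succ_top (Nat.le_add_left 1 n) _
      have hne : ((n : ℝ) + 1) ≠ 0 := by positivity
      rw [h2, ih, Finset.sum_range_succ, h1]
      push_cast
      field_simp
      ring
  have hces : Tendsto (fun n : ℕ => ((n : ℝ))⁻¹ * ∑ i ∈ Finset.range n, s i) atTop (nhds L) :=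
    h.cesaro
  have hdiff : Tendsto (fun n : ℕ => s n - ((n : ℝ))⁻¹ * ∑ i ∈ Finset.range n, s i)
      atTop (nhds 0) := by
    have := h.sub hces
    simpa using this
  refine hdiff.congr' ?_
  filter_upwards [eventually_ge_atTop 1] with n hn
  have hne : (n : ℝ) ≠ 0 := by
    have : 0 < n := hn
    positivity
  rw [key n]
  field_simp

/-- The elementary bound `∑_{i=1}^n i⁻² x² 1_{x ≤ i} ≤ 2 x` for `x ≥ 0`. -/
lemma sum_sq_trunc_le (x : ℝ) (hx : 0 ≤ x) (n : ℕ) :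
    ∑ i ∈ Finset.Icc 1 n, ((i : ℝ) ^ 2)⁻¹ * (x ^ 2 * (if x ≤ (i : ℝ) then 1 else 0))
      ≤ 2 * x := by
  classical
  set m : ℕ := max 1 ⌈x⌉₊ with hm
  have hm1 : 1 ≤ m := le_max_left _ _
  have hm0 : (0 : ℝ) < m := by exact_mod_cast hm1
  have hxm : x ≤ (m : ℝ) := le_trans (Nat.le_ceil x) (by exact_mod_cast le_max_right 1 ⌈x⌉₊)
  have step1 : ∑ i ∈ Finset.Icc 1 n, ((i : ℝ) ^ 2)⁻¹ * (x ^ 2 * (if x ≤ (i : ℝ) then 1 else 0))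
      ≤ ∑ i ∈ Finset.Ioo (m - 1) (n + 1), ((i : ℝ) ^ 2)⁻¹ * x ^ 2 := by
    have hrw : ∀ i : ℕ, ((i : ℝ) ^ 2)⁻¹ * (x ^ 2 * (if x ≤ (i : ℝ) then 1 else 0))
        = if x ≤ (i : ℝ) then ((i : ℝ) ^ 2)⁻¹ * x ^ 2 else 0 := by
      intro i; split <;> simp
    simp_rw [hrw]
    rw [← Finset.sum_filter]
    apply Finset.sum_le_sum_of_subset_of_nonneg
    · intro i hi
      simp only [Finset.mem_filter, Finset.mem_Icc] at hi
      obtain ⟨⟨hi1, hin⟩, hxi⟩ := hi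
      simp only [Finset.mem_Ioo]
      constructor
      · have hmi : m ≤ i := by
          refine max_le hi1 ?_
          exact Nat.ceil_le.2 hxi
        omega
      · omega
    · intro i _ _
      positivity
  have step2 : ∑ i ∈ Finset.Ioo (m - 1) (n + 1), ((i : ℝ) ^ 2)⁻¹ * x ^ 2
      ≤ (2 / ((m - 1 : ℕ) + 1)) * x ^ 2 := by
    rw [← Finset.sum_mul]
    apply mul_le_mul_of_nonneg_right _ (by positivity)
    have := sum_Ioo_inv_sq_le (α := ℝ) (m - 1) (n + 1)
    simpa using this
  have hmm : ((m - 1 : ℕ) : ℝ) + 1 = (m : ℝ) := by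
    have : m - 1 + 1 = m := Nat.succ_pred_eq_of_pos hm1
    exact_mod_cast congrArg (Nat.cast : ℕ → ℝ) this
  have step3 : (2 / ((m - 1 : ℕ) + 1)) * x ^ 2 ≤ 2 * x := by
    rw [hmm]
    rw [div_mul_eq_mul_div, div_le_iff₀ hm0]
    calc 2 * x ^ 2 = 2 * x * x := by ring
    _ ≤ 2 * x * m := by
        apply mul_le_mul_of_nonneg_left hxm (by positivity)
  linarith


set_option linter.unusedSectionVars false
section Main
variable {Ω : Type} [mΩ : MeasurableSpace Ω] {P : Measure Ω} [IsProbabilityMeasure P]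
  {X : ℕ → Ω → ℝ} {Δ : ℕ → Ω → Bool} {b : ℝ}

-- basic measurability of the pieces, w.r.t. any σ-algebra making X i and Δ i measurable
lemma meas_indF {m : MeasurableSpace Ω} (i : ℕ)
    (hm : MeasurableSpace.comap (Δ i) inferInstance ≤ m) :
    Measurable[m] (fun ω => if Δ i ω then (1 : ℝ) else 0) :=
  (Measurable.of_discrete (f := fun t : Bool => if t then (1:ℝ) else 0)).comp
    (Measurable.of_comap_le hm)

lemma meas_gT {m : MeasurableSpace Ω} (i : ℕ)
    (hm : MeasurableSpace.comap (X i) inferInstance ≤ m) :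
    Measurable[m] (fun ω => X i ω * (if X i ω ≤ (i : ℝ) then 1 else 0)) := by
  have hX : Measurable[m] (X i) := Measurable.of_comap_le hm
  have hg : Measurable (fun x : ℝ => x * (if x ≤ (i : ℝ) then 1 else 0)) := by
    apply measurable_id.mul
    exact Measurable.ite measurableSet_Iic measurable_const measurable_const
  exact hg.comp hX

lemma meas_Ysix {m : MeasurableSpace Ω} (i : ℕ)
    (hmX : MeasurableSpace.comap (X i) inferInstance ≤ m)
    (hmΔ : MeasurableSpace.comap (Δ i) inferInstance ≤ m) :
    Measurable[m] (Ysix X Δ b i) := by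
  have hX : Measurable[m] (X i) := Measurable.of_comap_le hmX
  have h1 : Measurable[m] (fun ω => (1 - b⁻¹ - (if Δ i ω then (1:ℝ) else 0))) :=
    measurable_const.sub (meas_indF i hmΔ)
  have h2 : Measurable[m] (fun ω => if X i ω ≤ (i : ℝ) then (1:ℝ) else 0) := by
    have : Measurable (fun x : ℝ => if x ≤ (i : ℝ) then (1:ℝ) else 0) :=
      Measurable.ite measurableSet_Iic measurable_const measurable_const
    exact this.comp hX
  exact ((h1.mul hX).mul h2 : Measurable[m] _)

lemma abs_Ysix_le (hb : 1 ≤ b) (hX0 : ∀ n ω, 0 ≤ X n ω) (i : ℕ) (ω : Ω) :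
    |Ysix X Δ b i ω| ≤ (i : ℝ) := by
  have hb0 : (0:ℝ) < b := lt_of_lt_of_le one_pos hb
  have hc0 : (0:ℝ) ≤ 1 - b⁻¹ := by
    have : b⁻¹ ≤ 1 := inv_le_one_of_one_le₀ hb
    linarith
  have hc1 : 1 - b⁻¹ ≤ 1 := by
    have : 0 ≤ b⁻¹ := inv_nonneg.2 hb0.le
    linarith
  have h1 : |1 - b⁻¹ - (if Δ i ω then (1:ℝ) else 0)| ≤ 1 := by
    split <;> rw [abs_le] <;> constructor <;> linarith
  have h2 : |X i ω * (if X i ω ≤ (i : ℝ) then 1 else 0)| ≤ (i : ℝ) := by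
    split_ifs with h
    · rw [mul_one, abs_of_nonneg (hX0 i ω)]; exact h
    · simp only [mul_zero, abs_zero]; positivity
  calc |Ysix X Δ b i ω| = |1 - b⁻¹ - (if Δ i ω then (1:ℝ) else 0)|
        * |X i ω * (if X i ω ≤ (i : ℝ) then 1 else 0)| := by
        rw [Ysix, mul_assoc, abs_mul]
  _ ≤ 1 * (i : ℝ) := by
      apply mul_le_mul h1 h2 (abs_nonneg _) zero_le_one
  _ = (i : ℝ) := one_mul _

lemma indep_sup_right_aux {Ω : Type*} {m0 : MeasurableSpace Ω} {P : Measure Ω}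
    [IsProbabilityMeasure P] {m₁ m₂ m₃ : MeasurableSpace Ω}
    (h₁ : m₁ ≤ m0) (h₂ : m₂ ≤ m0) (h₃ : m₃ ≤ m0)
    (h12 : Indep m₁ m₂ P) (h123 : Indep (m₁ ⊔ m₂) m₃ P) :
    Indep m₁ (m₂ ⊔ m₃) P := by
  classical
  set p1 : Set (Set Ω) := {s | MeasurableSet[m₁] s} with hp1def
  set p2 : Set (Set Ω) := {t | ∃ B C, MeasurableSet[m₂] B ∧ MeasurableSet[m₃] C ∧ t = B ∩ C}
    with hp2def
  have hgen2 : m₂ ⊔ m₃ = generateFrom p2 := by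
    refine le_antisymm (sup_le ?_ ?_) (generateFrom_le ?_)
    · intro B hB
      exact measurableSet_generateFrom ⟨B, Set.univ, hB, MeasurableSet.univ, by simp⟩
    · intro C hC
      exact measurableSet_generateFrom ⟨Set.univ, C, MeasurableSet.univ, hC, by simp⟩
    · rintro t ⟨B, C, hB, hC, rfl⟩
      exact ((le_sup_left (a := m₂) (b := m₃)) _ hB).inter ((le_sup_right (a := m₂) (b := m₃)) _ hC)
  have hpi2 : IsPiSystem p2 := by
    rintro t ⟨B, C, hB, hC, rfl⟩ t' ⟨B', C', hB', hC', rfl⟩ _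
    exact ⟨B ∩ B', C ∩ C', hB.inter hB', hC.inter hC', by ext ω; simp; tauto⟩
  refine IndepSets.indep (p1 := p1) (p2 := p2) h₁ (sup_le h₂ h₃) ?_ hpi2 ?_ hgen2 ?_
  · exact @isPiSystem_measurableSet Ω m₁
  · exact (@generateFrom_measurableSet Ω m₁).symm
  · rw [IndepSets_iff]
    rintro A t hA ⟨B, C, hB, hC, rfl⟩
    have h12' := (Indep_iff _ _ _).1 h12 A B hA hB
    have hAB : MeasurableSet[m₁ ⊔ m₂] (A ∩ B) :=
      ((le_sup_left (a := m₁) (b := m₂)) _ hA).inter ((le_sup_right (a := m₁) (b := m₂)) _ hB)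
    have h123' := (Indep_iff _ _ _).1 h123 (A ∩ B) C hAB hC
    have hBC := (Indep_iff _ _ _).1 h123 B C ((le_sup_right (a := m₁) (b := m₂)) _ hB) hC
    have : A ∩ (B ∩ C) = (A ∩ B) ∩ C := by rw [Set.inter_assoc]
    rw [this, h123', h12', hBC]
    ring

lemma integrable_Ysix (hb : 1 ≤ b) (hX : ∀ n, Measurable (X n)) (hΔ : ∀ i, Measurable (Δ i))
    (hX0 : ∀ n ω, 0 ≤ X n ω) (i : ℕ) : Integrable (Ysix X Δ b i) P :=
  Integrable.mono' (integrable_const (i : ℝ))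
    ((meas_Ysix i (hX i).comap_le (hΔ i).comap_le).aestronglyMeasurable)
    (ae_of_all _ fun ω => by rw [Real.norm_eq_abs]; exact abs_Ysix_le hb hX0 i ω)

/-- The law of `X (i+1)` is dominated by `b • μ`. -/
lemma map_law_le {μ : Measure ℝ} [IsProbabilityMeasure μ] (hb : 1 ≤ b)
    (hX : ∀ n, Measurable (X n))
    (hcond : ∀ n : ℕ, ∀ s : Set ℝ, MeasurableSet s →
        ∀ᵐ ω ∂P,
          (P[fun ω' => s.indicator (fun _ => (1 : ℝ)) (X (n + 1) ω') |
            ⨆ i : Fin n, MeasurableSpace.comap (X ((i : ℕ) + 1)) inferInstance]) ω ≤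
            b * (μ s).toReal) (i : ℕ) :
    Measure.map (X (i + 1)) P ≤ (ENNReal.ofReal b) • μ := by
  have hb0 : (0:ℝ) < b := lt_of_lt_of_le one_pos hb
  rw [Measure.le_iff]
  intro s hs
  rw [Measure.map_apply (hX _) hs, Measure.smul_apply, smul_eq_mul]
  have hFle : (⨆ j : Fin i, MeasurableSpace.comap (X ((j : ℕ) + 1)) inferInstance) ≤ mΩ :=
    iSup_le fun j => (hX _).comap_le
  have hind_eq : (fun ω => s.indicator (fun _ => (1:ℝ)) (X (i + 1) ω))
      = (X (i + 1) ⁻¹' s).indicator (fun _ => (1:ℝ)) := by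
    ext ω
    by_cases h : X (i + 1) ω ∈ s <;> simp [Set.indicator_apply, h]
  have hint : Integrable (fun ω => s.indicator (fun _ => (1:ℝ)) (X (i + 1) ω)) P := by
    rw [hind_eq]
    exact (integrable_const (1:ℝ)).indicator ((hX _) hs)
  have h1 : ∫ ω, (P[fun ω' => s.indicator (fun _ => (1:ℝ)) (X (i + 1) ω')|⨆ j : Fin i, MeasurableSpace.comap (X ((j : ℕ) + 1)) inferInstance]) ω ∂P
      = ∫ ω, s.indicator (fun _ => (1:ℝ)) (X (i + 1) ω) ∂P := integral_condExp hFle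
  have h2 : ∫ ω, s.indicator (fun _ => (1:ℝ)) (X (i + 1) ω) ∂P
      = (P (X (i + 1) ⁻¹' s)).toReal := by
    rw [hind_eq]
    exact integral_indicator_one ((hX _) hs)
  have h3 : ∫ ω, (P[fun ω' => s.indicator (fun _ => (1:ℝ)) (X (i + 1) ω')|⨆ j : Fin i, MeasurableSpace.comap (X ((j : ℕ) + 1)) inferInstance]) ω ∂P
      ≤ ∫ _ω, b * (μ s).toReal ∂P := by
    apply integral_mono_ae integrable_condExp (integrable_const _)
    exact hcond i s hs
  rw [h1, h2] at h3
  rw [integral_const, probReal_univ, one_smul] at h3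
  have h4 := ENNReal.ofReal_le_ofReal h3
  rw [ENNReal.ofReal_toReal (measure_ne_top P _)] at h4
  refine h4.trans ?_
  rw [ENNReal.ofReal_mul hb0.le, ENNReal.ofReal_toReal (measure_ne_top μ _)]

/-- `Δ (n+1)` is independent of the σ-algebra generated by `Δ 1, …, Δ n` and all the `X`'s. -/
lemma indep_main (hX : ∀ n, Measurable (X n)) (hΔ : ∀ i, Measurable (Δ i))
    (hΔindep : iIndepFun Δ P)
    (hIndepXΔ : IndepFun (fun ω => (fun i => Δ i ω)) (fun ω => (fun n => X n ω)) P) (n : ℕ) :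
    Indep (MeasurableSpace.comap (Δ (n + 1)) inferInstance)
      ((⨆ i : Fin n, MeasurableSpace.comap (Δ ((i : ℕ) + 1)) inferInstance) ⊔
        MeasurableSpace.comap (fun ω => (fun k => X k ω)) inferInstance) P := by
  have hΔi_le : ∀ i, MeasurableSpace.comap (Δ i) inferInstance ≤
      MeasurableSpace.comap (fun ω : Ω => (fun i => Δ i ω)) inferInstance := by
    intro i
    have h : MeasurableSpace.comap (Δ i) inferInstance
        = MeasurableSpace.comap (fun ω => (fun k => Δ k ω))
          (MeasurableSpace.comap (fun f : ℕ → Bool => f i) inferInstance) := by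
      rw [MeasurableSpace.comap_comp]; rfl
    rw [h]
    exact MeasurableSpace.comap_mono (measurable_pi_apply i).comap_le
  have hmXle : MeasurableSpace.comap (fun ω : Ω => (fun k => X k ω)) inferInstance ≤ mΩ :=
    (measurable_pi_lambda _ hX).comap_le
  have h12 : Indep (MeasurableSpace.comap (Δ (n + 1)) inferInstance)
      (⨆ i : Fin n, MeasurableSpace.comap (Δ ((i : ℕ) + 1)) inferInstance) P := by
    have hiI : iIndep (fun i => MeasurableSpace.comap (Δ i) inferInstance) P :=
      hΔindep.iIndep
    have hcompl := indep_biSup_compl (fun i => (hΔ i).comap_le) hiI {n + 1}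
    have hl : (⨆ i ∈ ({n + 1} : Set ℕ), MeasurableSpace.comap (Δ i) inferInstance)
        = MeasurableSpace.comap (Δ (n + 1)) inferInstance := by simp
    rw [hl] at hcompl
    refine indep_of_indep_of_le_right hcompl ?_
    refine iSup_le fun j => ?_
    have hj : ((j : ℕ) + 1) ∈ ({n + 1} : Set ℕ)ᶜ := by
      simp only [Set.mem_compl_iff, Set.mem_singleton_iff]
      have := j.2; omega
    exact le_biSup (f := fun i => MeasurableSpace.comap (Δ i) inferInstance) hj
  have h123 : Indep ((MeasurableSpace.comap (Δ (n + 1)) inferInstance) ⊔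
      (⨆ i : Fin n, MeasurableSpace.comap (Δ ((i : ℕ) + 1)) inferInstance))
      (MeasurableSpace.comap (fun ω : Ω => (fun k => X k ω)) inferInstance) P := by
    refine indep_of_indep_of_le_left (hIndepXΔ :
      Indep (MeasurableSpace.comap (fun ω : Ω => (fun i => Δ i ω)) inferInstance)
        (MeasurableSpace.comap (fun ω : Ω => (fun k => X k ω)) inferInstance) P) ?_
    exact sup_le (hΔi_le _) (iSup_le fun j => hΔi_le _)
  exact indep_sup_right_aux ((hΔ _).comap_le)
    (iSup_le fun j => (hΔ _).comap_le) hmXle h12 h123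

lemma comap_coord_le {β : Type*} [MeasurableSpace β] (f : ℕ → Ω → β) (i : ℕ) :
    MeasurableSpace.comap (f i) inferInstance ≤
      MeasurableSpace.comap (fun ω : Ω => (fun k => f k ω)) inferInstance := by
  have h : MeasurableSpace.comap (f i) inferInstance
      = MeasurableSpace.comap (fun ω : Ω => (fun k => f k ω))
        (MeasurableSpace.comap (fun g : ℕ → β => g i) inferInstance) := by
    rw [MeasurableSpace.comap_comp]; rfl
  rw [h]
  exact MeasurableSpace.comap_mono (measurable_pi_apply i).comap_le

lemma integral_fB (hb : 1 ≤ b) (hΔ : ∀ i, Measurable (Δ i))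
    (hΔp : ∀ i, P {ω | Δ i ω = true} = ENNReal.ofReal (1 - b⁻¹)) (i : ℕ) :
    ∫ ω, (1 - b⁻¹ - (if Δ i ω then (1:ℝ) else 0)) ∂P = 0 := by
  have hb0 : (0:ℝ) < b := lt_of_lt_of_le one_pos hb
  have hc0 : (0:ℝ) ≤ 1 - b⁻¹ := by
    have : b⁻¹ ≤ 1 := inv_le_one_of_one_le₀ hb
    linarith
  have hind_eq : (fun ω => if Δ i ω then (1:ℝ) else 0)
      = Set.indicator {ω | Δ i ω = true} (fun _ => (1:ℝ)) := by
    ext ω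
    by_cases h : Δ i ω <;> simp [Set.indicator_apply, h]
  have hms : MeasurableSet {ω | Δ i ω = true} := (hΔ i) (MeasurableSet.singleton true)
  have hintind : Integrable (fun ω => if Δ i ω then (1:ℝ) else 0) P := by
    rw [hind_eq]; exact (integrable_const (1:ℝ)).indicator hms
  rw [integral_sub (integrable_const _) hintind, integral_const, probReal_univ,
    one_smul]
  have : ∫ ω, (if Δ i ω then (1:ℝ) else 0) ∂P = (P {ω | Δ i ω = true}).toReal := by
    rw [hind_eq]; exact integral_indicator_one hms
  rw [this, hΔp i, ENNReal.toReal_ofReal hc0, sub_self]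

lemma condY_zero (hb : 1 ≤ b) (hX : ∀ n, Measurable (X n)) (hΔ : ∀ i, Measurable (Δ i))
    (hX0 : ∀ n ω, 0 ≤ X n ω)
    (hΔindep : iIndepFun Δ P)
    (hΔp : ∀ i, P {ω | Δ i ω = true} = ENNReal.ofReal (1 - b⁻¹))
    (hIndepXΔ : IndepFun (fun ω => (fun i => Δ i ω)) (fun ω => (fun n => X n ω)) P) (n : ℕ) :
    P[Ysix X Δ b (n + 1) | Gsix X Δ n] =ᵐ[P] 0 := by
  have hHle : ((⨆ i : Fin n, MeasurableSpace.comap (Δ ((i : ℕ) + 1)) inferInstance) ⊔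
      MeasurableSpace.comap (fun ω : Ω => (fun k => X k ω)) inferInstance) ≤ mΩ :=
    sup_le (iSup_le fun j => (hΔ _).comap_le) ((measurable_pi_lambda _ hX).comap_le)
  have hGH : Gsix X Δ n ≤ ((⨆ i : Fin n, MeasurableSpace.comap (Δ ((i : ℕ) + 1)) inferInstance) ⊔
      MeasurableSpace.comap (fun ω : Ω => (fun k => X k ω)) inferInstance) := by
    rw [Gsix]
    apply sup_le
    · exact le_trans (iSup_le fun j => comap_coord_le X _) le_sup_right
    · exact le_sup_left
  -- the truncated X part, measurable w.r.t. H and bounded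
  have hgm : Measurable[(⨆ i : Fin n, MeasurableSpace.comap (Δ ((i : ℕ) + 1)) inferInstance) ⊔
      MeasurableSpace.comap (fun ω : Ω => (fun k => X k ω)) inferInstance]
      (fun ω => X (n+1) ω * (if X (n+1) ω ≤ ((n+1 : ℕ) : ℝ) then 1 else 0)) :=
    meas_gT (n+1) (le_trans (comap_coord_le X (n+1)) le_sup_right)
  -- the Bernoulli part
  have hfBsm : StronglyMeasurable[MeasurableSpace.comap (Δ (n+1)) inferInstance]
      (fun ω => 1 - b⁻¹ - (if Δ (n+1) ω then (1:ℝ) else 0)) :=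
    ((Measurable.of_discrete (f := fun t : Bool => 1 - b⁻¹ - if t then (1:ℝ) else 0)).comp
      (Measurable.of_comap_le le_rfl)).stronglyMeasurable
  have hfBint : Integrable (fun ω => 1 - b⁻¹ - (if Δ (n+1) ω then (1:ℝ) else 0)) P := by
    refine Integrable.mono' (integrable_const (2:ℝ))
      ((measurable_const.sub (meas_indF (n+1) (hΔ _).comap_le)).aestronglyMeasurable)
      (ae_of_all _ fun ω => ?_)
    rw [Real.norm_eq_abs]
    have : b⁻¹ ≤ 1 := inv_le_one_of_one_le₀ hb
    have h0 : (0:ℝ) ≤ b⁻¹ := inv_nonneg.2 (lt_of_lt_of_le one_pos hb).le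
    split <;> rw [abs_le] <;> constructor <;> linarith
  have hYeq : Ysix X Δ b (n + 1) =
      (fun ω => X (n+1) ω * (if X (n+1) ω ≤ ((n+1 : ℕ) : ℝ) then 1 else 0)) *
      (fun ω => 1 - b⁻¹ - (if Δ (n+1) ω then (1:ℝ) else 0)) := by
    funext ω
    simp only [Ysix, Pi.mul_apply]
    ring
  have hmulbd : ∀ᵐ ω ∂P, ‖X (n+1) ω * (if X (n+1) ω ≤ ((n+1 : ℕ) : ℝ) then 1 else 0)‖
      ≤ ((n+1 : ℕ) : ℝ) := by
    refine ae_of_all _ fun ω => ?_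
    rw [Real.norm_eq_abs]
    split_ifs with h
    · rw [mul_one, abs_of_nonneg (hX0 _ ω)]; exact h
    · simp only [mul_zero, abs_zero]; positivity
  have stepA : P[Ysix X Δ b (n + 1) |
      (⨆ i : Fin n, MeasurableSpace.comap (Δ ((i : ℕ) + 1)) inferInstance) ⊔
      MeasurableSpace.comap (fun ω : Ω => (fun k => X k ω)) inferInstance] =ᵐ[P] 0 := by
    rw [hYeq]
    have h1 := condExp_stronglyMeasurable_mul_of_bound hHle hgm.stronglyMeasurable hfBint
      ((n+1 : ℕ) : ℝ) hmulbd
    refine h1.trans ?_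
    have h2 := condExp_indep_eq ((hΔ (n+1)).comap_le) hHle hfBsm
      (indep_main hX hΔ hΔindep hIndepXΔ n)
    have h3 : ∫ ω, (1 - b⁻¹ - (if Δ (n+1) ω then (1:ℝ) else 0)) ∂P = 0 :=
      integral_fB hb hΔ hΔp (n+1)
    calc (fun ω => X (n+1) ω * (if X (n+1) ω ≤ ((n+1 : ℕ) : ℝ) then 1 else 0)) *
          P[fun ω => 1 - b⁻¹ - (if Δ (n+1) ω then (1:ℝ) else 0) |
            (⨆ i : Fin n, MeasurableSpace.comap (Δ ((i : ℕ) + 1)) inferInstance) ⊔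
            MeasurableSpace.comap (fun ω : Ω => (fun k => X k ω)) inferInstance]
        =ᵐ[P] (fun ω => X (n+1) ω * (if X (n+1) ω ≤ ((n+1 : ℕ) : ℝ) then 1 else 0)) *
          (fun _ => ∫ ω, (1 - b⁻¹ - (if Δ (n+1) ω then (1:ℝ) else 0)) ∂P) :=
        EventuallyEq.mul EventuallyEq.rfl h2
    _ = 0 := by
        rw [integral_fB hb hΔ hΔp (n+1)]
        funext ω
        simp
  have tower := condExp_condExp_of_le hGH hHle (f := Ysix X Δ b (n + 1)) (μ := P)
  refine EventuallyEq.trans tower.symm ?_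
  refine EventuallyEq.trans (condExp_congr_ae stepA) ?_
  rw [condExp_zero]

lemma comapX_le_Gsix {i n : ℕ} (h1 : 1 ≤ i) (h2 : i ≤ n) :
    MeasurableSpace.comap (X i) inferInstance ≤ Gsix X Δ n := by
  obtain ⟨j, rfl⟩ : ∃ j, i = j + 1 := ⟨i - 1, by omega⟩
  exact le_trans (le_iSup (fun k : Fin n =>
    MeasurableSpace.comap (X ((k : ℕ) + 1)) inferInstance) ⟨j, by omega⟩) le_sup_left

lemma comapΔ_le_Gsix {i n : ℕ} (h1 : 1 ≤ i) (h2 : i ≤ n) :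
    MeasurableSpace.comap (Δ i) inferInstance ≤ Gsix X Δ n := by
  obtain ⟨j, rfl⟩ : ∃ j, i = j + 1 := ⟨i - 1, by omega⟩
  exact le_trans (le_iSup (fun k : Fin n =>
    MeasurableSpace.comap (Δ ((k : ℕ) + 1)) inferInstance) ⟨j, by omega⟩) le_sup_right

lemma Gsix_le (hX : ∀ n, Measurable (X n)) (hΔ : ∀ i, Measurable (Δ i)) (n : ℕ) :
    Gsix X Δ n ≤ mΩ :=
  sup_le (iSup_le fun j => (hX _).comap_le) (iSup_le fun j => (hΔ _).comap_le)

lemma Gsix_mono : Monotone (Gsix X Δ : ℕ → MeasurableSpace Ω) := by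
  intro n m hnm
  apply sup_le_sup
  · exact iSup_le fun j => le_iSup (fun k : Fin m =>
      MeasurableSpace.comap (X ((k : ℕ) + 1)) inferInstance) ⟨j, by omega⟩
  · exact iSup_le fun j => le_iSup (fun k : Fin m =>
      MeasurableSpace.comap (Δ ((k : ℕ) + 1)) inferInstance) ⟨j, by omega⟩

lemma meas_Ssix (n : ℕ) : Measurable[Gsix X Δ n] (Ssix X Δ b n) := by
  rw [show Ssix X Δ b n = fun ω => ∑ i ∈ Finset.Icc 1 n, Ysix X Δ b i ω / (i : ℝ) from rfl]
  apply Finset.measurable_sum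
  intro i hi
  simp only [Finset.mem_Icc] at hi
  exact (meas_Ysix i (comapX_le_Gsix hi.1 hi.2) (comapΔ_le_Gsix hi.1 hi.2)).div_const _

lemma integrable_Ssix (hb : 1 ≤ b) (hX : ∀ n, Measurable (X n)) (hΔ : ∀ i, Measurable (Δ i))
    (hX0 : ∀ n ω, 0 ≤ X n ω) (n : ℕ) : Integrable (Ssix X Δ b n) P := by
  rw [show Ssix X Δ b n = fun ω => ∑ i ∈ Finset.Icc 1 n, Ysix X Δ b i ω / (i : ℝ) from rfl]
  apply integrable_finset_sum
  intro i hi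
  exact (integrable_Ysix hb hX hΔ hX0 i).div_const _

lemma martprop (hb : 1 ≤ b) (hX : ∀ n, Measurable (X n)) (hΔ : ∀ i, Measurable (Δ i))
    (hX0 : ∀ n ω, 0 ≤ X n ω)
    (hΔindep : iIndepFun Δ P)
    (hΔp : ∀ i, P {ω | Δ i ω = true} = ENNReal.ofReal (1 - b⁻¹))
    (hIndepXΔ : IndepFun (fun ω => (fun i => Δ i ω)) (fun ω => (fun n => X n ω)) P) (n : ℕ) :
    Ssix X Δ b n =ᵐ[P] P[Ssix X Δ b (n + 1) | Gsix X Δ n] := by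
  have hsplit : Ssix X Δ b (n + 1)
      = Ssix X Δ b n + (((n + 1 : ℕ) : ℝ))⁻¹ • Ysix X Δ b (n + 1) := by
    funext ω
    simp only [Ssix, Pi.add_apply, Pi.smul_apply, smul_eq_mul]
    rw [Finset.sum_Icc_succ_top (Nat.le_add_left 1 n)]
    ring
  rw [hsplit]
  have h1 := condExp_add (μ := P) (m := Gsix X Δ n)
    (integrable_Ssix hb hX hΔ hX0 n)
    (((integrable_Ysix hb hX hΔ hX0 (n+1)).smul (((n + 1 : ℕ) : ℝ))⁻¹))
  refine EventuallyEq.symm (h1.trans ?_)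
  have h2 : P[Ssix X Δ b n | Gsix X Δ n] = Ssix X Δ b n :=
    condExp_of_stronglyMeasurable (Gsix_le hX hΔ n) (meas_Ssix n).stronglyMeasurable
      (integrable_Ssix hb hX hΔ hX0 n)
  have h3 : P[(((n + 1 : ℕ) : ℝ))⁻¹ • Ysix X Δ b (n + 1) | Gsix X Δ n]
      =ᵐ[P] (((n + 1 : ℕ) : ℝ))⁻¹ • P[Ysix X Δ b (n + 1) | Gsix X Δ n] :=
    condExp_smul _ _ _
  have h4 : (((n + 1 : ℕ) : ℝ))⁻¹ • P[Ysix X Δ b (n + 1) | Gsix X Δ n]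
      =ᵐ[P] (0 : Ω → ℝ) := by
    filter_upwards [condY_zero hb hX hΔ hX0 hΔindep hΔp hIndepXΔ n] with ω hω
    simp only [Pi.smul_apply, hω, Pi.zero_apply, smul_eq_mul, mul_zero]
  rw [h2]
  filter_upwards [h3, h4] with ω hω3 hω4
  simp only [Pi.add_apply, hω3, hω4, Pi.zero_apply, add_zero]

lemma cross_zero (hb : 1 ≤ b) (hX : ∀ n, Measurable (X n)) (hΔ : ∀ i, Measurable (Δ i))
    (hX0 : ∀ n ω, 0 ≤ X n ω)
    (hΔindep : iIndepFun Δ P)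
    (hΔp : ∀ i, P {ω | Δ i ω = true} = ENNReal.ofReal (1 - b⁻¹))
    (hIndepXΔ : IndepFun (fun ω => (fun i => Δ i ω)) (fun ω => (fun n => X n ω)) P)
    {i j : ℕ} (hij : i ≠ j) :
    ∫ ω, Ysix X Δ b i ω * Ysix X Δ b j ω ∂P = 0 := by
  have hb0 : (0:ℝ) < b := lt_of_lt_of_le one_pos hb
  have hc0 : (0:ℝ) ≤ 1 - b⁻¹ := by
    have : b⁻¹ ≤ 1 := inv_le_one_of_one_le₀ hb; linarith
  have hc1 : 1 - b⁻¹ ≤ 1 := by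
    have : 0 ≤ b⁻¹ := inv_nonneg.2 hb0.le; linarith
  set u : (ℕ → Bool) → ℝ := fun d =>
    (1 - b⁻¹ - if d i then 1 else 0) * (1 - b⁻¹ - if d j then 1 else 0) with hu_def
  set v : (ℕ → ℝ) → ℝ := fun x =>
    (x i * if x i ≤ (i : ℝ) then 1 else 0) * (x j * if x j ≤ (j : ℝ) then 1 else 0) with hv_def
  have hu : Measurable u := by
    apply Measurable.mul
    · exact (Measurable.of_discrete (f := fun t : Bool => 1 - b⁻¹ - if t then (1:ℝ) else 0)).comp
        (measurable_pi_apply i)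
    · exact (Measurable.of_discrete (f := fun t : Bool => 1 - b⁻¹ - if t then (1:ℝ) else 0)).comp
        (measurable_pi_apply j)
  have hv : Measurable v := by
    apply Measurable.mul
    · exact (measurable_pi_apply i).mul
        (Measurable.ite ((measurable_pi_apply i) measurableSet_Iic)
          measurable_const measurable_const)
    · exact (measurable_pi_apply j).mul
        (Measurable.ite ((measurable_pi_apply j) measurableSet_Iic)
          measurable_const measurable_const)
  have huv : IndepFun (u ∘ (fun ω => (fun k => Δ k ω))) (v ∘ (fun ω => (fun k => X k ω))) P :=
    hIndepXΔ.comp hu hv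
  have habs1 : ∀ t : Bool, |1 - b⁻¹ - (if t then (1:ℝ) else 0)| ≤ 1 := by
    intro t; cases t <;> simp only [Bool.false_eq_true, ↓reduceIte, sub_zero] <;> rw [abs_le] <;> constructor <;> linarith
  have hu_int : Integrable (u ∘ (fun ω => (fun k => Δ k ω))) P := by
    refine Integrable.mono' (integrable_const (1:ℝ)) ?_ (ae_of_all _ fun ω => ?_)
    · exact ((hu.comp (measurable_pi_lambda _ hΔ))).aestronglyMeasurable
    · rw [Function.comp_apply, Real.norm_eq_abs, hu_def, abs_mul]
      exact mul_le_one₀ (habs1 _) (abs_nonneg _) (habs1 _)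
  have habsX : ∀ (k : ℕ) (ω : Ω), |X k ω * (if X k ω ≤ (k : ℝ) then 1 else 0)| ≤ (k : ℝ) := by
    intro k ω
    split_ifs with h
    · rw [mul_one, abs_of_nonneg (hX0 _ ω)]; exact h
    · simp only [mul_zero, abs_zero]; positivity
  have hv_int : Integrable (v ∘ (fun ω => (fun k => X k ω))) P := by
    refine Integrable.mono' (integrable_const ((i : ℝ) * (j : ℝ))) ?_ (ae_of_all _ fun ω => ?_)
    · exact ((hv.comp (measurable_pi_lambda _ hX))).aestronglyMeasurable
    · rw [Function.comp_apply, Real.norm_eq_abs, hv_def, abs_mul]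
      exact mul_le_mul (habsX i ω) (habsX j ω) (abs_nonneg _) (Nat.cast_nonneg i)
  have heq : (fun ω => Ysix X Δ b i ω * Ysix X Δ b j ω)
      = fun ω => (u ∘ (fun ω => (fun k => Δ k ω))) ω * (v ∘ (fun ω => (fun k => X k ω))) ω := by
    funext ω
    simp only [Ysix, Function.comp_apply, hu_def, hv_def]
    ring
  rw [heq]
  have hmul : ∫ ω, (u ∘ (fun ω => (fun k => Δ k ω))) ω * (v ∘ (fun ω => (fun k => X k ω))) ω ∂P
      = (∫ ω, (u ∘ (fun ω => (fun k => Δ k ω))) ω ∂P)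
        * ∫ ω, (v ∘ (fun ω => (fun k => X k ω))) ω ∂P :=
    huv.integral_fun_mul_eq_mul_integral hu_int.1 hv_int.1
  rw [hmul]
  have hijΔ : IndepFun (fun ω => 1 - b⁻¹ - (if Δ i ω then (1:ℝ) else 0))
      (fun ω => 1 - b⁻¹ - (if Δ j ω then (1:ℝ) else 0)) P :=
    (hΔindep.indepFun hij).comp
      (Measurable.of_discrete (f := fun t : Bool => 1 - b⁻¹ - if t then (1:ℝ) else 0))
      (Measurable.of_discrete (f := fun t : Bool => 1 - b⁻¹ - if t then (1:ℝ) else 0))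
  have hfi_int : ∀ k : ℕ, Integrable (fun ω => 1 - b⁻¹ - (if Δ k ω then (1:ℝ) else 0)) P := by
    intro k
    refine Integrable.mono' (integrable_const (1:ℝ))
      ((measurable_const.sub (meas_indF k (hΔ k).comap_le)).aestronglyMeasurable)
      (ae_of_all _ fun ω => ?_)
    rw [Real.norm_eq_abs]; exact habs1 _
  have : ∫ ω, (u ∘ (fun ω => (fun k => Δ k ω))) ω ∂P = 0 := by
    have heq2 : (fun ω => (u ∘ (fun ω => (fun k => Δ k ω))) ω)
        = fun ω => (1 - b⁻¹ - (if Δ i ω then (1:ℝ) else 0))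
          * (1 - b⁻¹ - (if Δ j ω then (1:ℝ) else 0)) := rfl
    have hmul2 : ∫ ω, (1 - b⁻¹ - (if Δ i ω then (1:ℝ) else 0))
        * (1 - b⁻¹ - (if Δ j ω then (1:ℝ) else 0)) ∂P
        = (∫ ω, (1 - b⁻¹ - (if Δ i ω then (1:ℝ) else 0)) ∂P)
          * ∫ ω, (1 - b⁻¹ - (if Δ j ω then (1:ℝ) else 0)) ∂P :=
      hijΔ.integral_fun_mul_eq_mul_integral (hfi_int i).1 (hfi_int j).1
    rw [heq2, hmul2, integral_fB hb hΔ hΔp i, zero_mul]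
  rw [this, zero_mul]

lemma diag_bound {μ : Measure ℝ} [IsProbabilityMeasure μ] (hb : 1 ≤ b)
    (hX : ∀ n, Measurable (X n)) (hΔ : ∀ i, Measurable (Δ i)) (hX0 : ∀ n ω, 0 ≤ X n ω)
    (hμ0 : μ (Set.Iio 0) = 0)
    (hcond : ∀ n : ℕ, ∀ s : Set ℝ, MeasurableSet s →
        ∀ᵐ ω ∂P,
          (P[fun ω' => s.indicator (fun _ => (1 : ℝ)) (X (n + 1) ω') |
            ⨆ i : Fin n, MeasurableSpace.comap (X ((i : ℕ) + 1)) inferInstance]) ω ≤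
            b * (μ s).toReal) (k : ℕ) :
    ∫ ω, (Ysix X Δ b (k + 1) ω) ^ 2 ∂P
      ≤ b * (∫⁻ x, ENNReal.ofReal (x ^ 2 * (if x ≤ ((k + 1 : ℕ) : ℝ) then 1 else 0)) ∂μ).toReal
      := by
  have hb0 : (0:ℝ) < b := lt_of_lt_of_le one_pos hb
  have hc0 : (0:ℝ) ≤ 1 - b⁻¹ := by
    have : b⁻¹ ≤ 1 := inv_le_one_of_one_le₀ hb; linarith
  have hc1 : 1 - b⁻¹ ≤ 1 := by
    have : 0 ≤ b⁻¹ := inv_nonneg.2 hb0.le; linarith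
  set φ : ℝ → ℝ := fun x => x ^ 2 * (if x ≤ ((k + 1 : ℕ) : ℝ) then 1 else 0) with hφ_def
  have hφm : Measurable φ := by
    apply Measurable.mul
    · exact (measurable_id.pow_const 2)
    · exact Measurable.ite measurableSet_Iic measurable_const measurable_const
  have hφ0 : ∀ x, 0 ≤ φ x := by
    intro x; simp only [hφ_def]; split_ifs <;> simp [sq_nonneg]
  have hφle : ∀ x, 0 ≤ x → φ x ≤ ((k + 1 : ℕ) : ℝ) ^ 2 := by
    intro x hx
    simp only [hφ_def]
    split_ifs with h
    · rw [mul_one]; exact pow_le_pow_left₀ hx h 2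
    · rw [mul_zero]; positivity
  -- pointwise bound Y² ≤ φ ∘ X
  have hpt : ∀ ω, (Ysix X Δ b (k + 1) ω) ^ 2 ≤ φ (X (k + 1) ω) := by
    intro ω
    have hf2 : (1 - b⁻¹ - (if Δ (k+1) ω then (1:ℝ) else 0)) ^ 2 ≤ 1 := by
      split_ifs <;> nlinarith
    have hind2 : ((if X (k+1) ω ≤ ((k + 1 : ℕ) : ℝ) then (1:ℝ) else 0)) ^ 2
        = (if X (k+1) ω ≤ ((k + 1 : ℕ) : ℝ) then (1:ℝ) else 0) := by split_ifs <;> ring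
    calc (Ysix X Δ b (k + 1) ω) ^ 2
        = (1 - b⁻¹ - (if Δ (k+1) ω then (1:ℝ) else 0)) ^ 2
          * ((X (k+1) ω) ^ 2 * ((if X (k+1) ω ≤ ((k + 1 : ℕ) : ℝ) then (1:ℝ) else 0)) ^ 2) := by
          rw [Ysix]; ring
    _ ≤ 1 * ((X (k+1) ω) ^ 2 * ((if X (k+1) ω ≤ ((k + 1 : ℕ) : ℝ) then (1:ℝ) else 0)) ^ 2) := by
          apply mul_le_mul_of_nonneg_right hf2
          positivity
    _ = φ (X (k+1) ω) := by simp only [hφ_def]; rw [one_mul, hind2]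
  -- integrability
  have hYm : Measurable (Ysix X Δ b (k+1)) := meas_Ysix _ (hX _).comap_le (hΔ _).comap_le
  have hY2int : Integrable (fun ω => (Ysix X Δ b (k + 1) ω) ^ 2) P := by
    refine Integrable.mono' (integrable_const (((k + 1 : ℕ) : ℝ) ^ 2))
      ((hYm.pow_const 2).aestronglyMeasurable) (ae_of_all _ fun ω => ?_)
    rw [Real.norm_eq_abs, abs_pow]
    exact pow_le_pow_left₀ (abs_nonneg _) (abs_Ysix_le hb hX0 (k+1) ω) 2
  have hφXint : Integrable (fun ω => φ (X (k + 1) ω)) P := by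
    refine Integrable.mono' (integrable_const (((k + 1 : ℕ) : ℝ) ^ 2))
      ((hφm.comp (hX _)).aestronglyMeasurable) (ae_of_all _ fun ω => ?_)
    rw [Real.norm_eq_abs, abs_of_nonneg (hφ0 _)]
    exact hφle _ (hX0 _ ω)
  have h1 : ∫ ω, (Ysix X Δ b (k + 1) ω) ^ 2 ∂P ≤ ∫ ω, φ (X (k + 1) ω) ∂P :=
    integral_mono hY2int hφXint hpt
  -- rewrite as lintegral and use the law bound
  have h2 : ∫ ω, φ (X (k + 1) ω) ∂P
      = (∫⁻ ω, ENNReal.ofReal (φ (X (k + 1) ω)) ∂P).toReal := by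
    rw [integral_eq_lintegral_of_nonneg_ae (ae_of_all _ fun ω => hφ0 _)
      ((hφm.comp (hX _)).aestronglyMeasurable)]
  have h3 : ∫⁻ ω, ENNReal.ofReal (φ (X (k + 1) ω)) ∂P
      = ∫⁻ x, ENNReal.ofReal (φ x) ∂(Measure.map (X (k + 1)) P) :=
    (lintegral_map (ENNReal.measurable_ofReal.comp hφm) (hX _)).symm
  have h4 : ∫⁻ x, ENNReal.ofReal (φ x) ∂(Measure.map (X (k + 1)) P)
      ≤ ENNReal.ofReal b * ∫⁻ x, ENNReal.ofReal (φ x) ∂μ := by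
    calc ∫⁻ x, ENNReal.ofReal (φ x) ∂(Measure.map (X (k + 1)) P)
        ≤ ∫⁻ x, ENNReal.ofReal (φ x) ∂((ENNReal.ofReal b) • μ) :=
        lintegral_mono' (map_law_le hb hX hcond k) le_rfl
    _ = ENNReal.ofReal b * ∫⁻ x, ENNReal.ofReal (φ x) ∂μ := lintegral_smul_measure _ _
  have hIfin : ∫⁻ x, ENNReal.ofReal (φ x) ∂μ ≠ ⊤ := by
    have hae : ∀ᵐ x ∂μ, 0 ≤ x := by
      rw [ae_iff]
      have : {x : ℝ | ¬ 0 ≤ x} = Set.Iio 0 := by ext x; simp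
      rw [this]; exact hμ0
    have hbd : ∀ᵐ x ∂μ, ENNReal.ofReal (φ x) ≤ ENNReal.ofReal (((k + 1 : ℕ) : ℝ) ^ 2) := by
      filter_upwards [hae] with x hx
      exact ENNReal.ofReal_le_ofReal (hφle x hx)
    have := lintegral_mono_ae hbd
    rw [lintegral_const, measure_univ, mul_one] at this
    exact ne_top_of_le_ne_top ENNReal.ofReal_ne_top this
  rw [h2, h3] at h1
  refine h1.trans ?_
  have htr := ENNReal.toReal_mono (by
      exact ENNReal.mul_ne_top ENNReal.ofReal_ne_top hIfin) h4
  refine htr.trans ?_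
  rw [ENNReal.toReal_mul, ENNReal.toReal_ofReal hb0.le]

lemma l2_bound {μ : Measure ℝ} [IsProbabilityMeasure μ] (hb : 1 ≤ b)
    (hX : ∀ n, Measurable (X n)) (hΔ : ∀ i, Measurable (Δ i)) (hX0 : ∀ n ω, 0 ≤ X n ω)
    (hμ0 : μ (Set.Iio 0) = 0) (hμm : (∫⁻ x, ENNReal.ofReal x ∂μ) < ⊤)
    (hcond : ∀ n : ℕ, ∀ s : Set ℝ, MeasurableSet s →
        ∀ᵐ ω ∂P,
          (P[fun ω' => s.indicator (fun _ => (1 : ℝ)) (X (n + 1) ω') |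
            ⨆ i : Fin n, MeasurableSpace.comap (X ((i : ℕ) + 1)) inferInstance]) ω ≤
            b * (μ s).toReal)
    (hΔindep : iIndepFun Δ P)
    (hΔp : ∀ i, P {ω | Δ i ω = true} = ENNReal.ofReal (1 - b⁻¹))
    (hIndepXΔ : IndepFun (fun ω => (fun i => Δ i ω)) (fun ω => (fun n => X n ω)) P)
    (n : ℕ) :
    ∫ ω, (Ssix X Δ b n ω) ^ 2 ∂P ≤ 2 * b * (∫⁻ x, ENNReal.ofReal x ∂μ).toReal := by
  have hb0 : (0:ℝ) < b := lt_of_lt_of_le one_pos hb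
  set I : ℕ → ℝ≥0∞ :=
    fun i => ∫⁻ x, ENNReal.ofReal (x ^ 2 * (if x ≤ (i : ℝ) then 1 else 0)) ∂μ with hI_def
  have hae : ∀ᵐ x ∂μ, 0 ≤ x := by
    rw [ae_iff]
    have : {x : ℝ | ¬ 0 ≤ x} = Set.Iio 0 := by ext x; simp
    rw [this]; exact hμ0
  have hφmeas : ∀ i : ℕ, Measurable (fun x : ℝ =>
      ENNReal.ofReal (x ^ 2 * (if x ≤ (i : ℝ) then 1 else 0))) := by
    intro i
    apply ENNReal.measurable_ofReal.comp
    exact (measurable_id.pow_const 2).mul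
      (Measurable.ite measurableSet_Iic measurable_const measurable_const)
  have hIfin : ∀ i : ℕ, I i ≠ ⊤ := by
    intro i
    have hbd : ∀ᵐ x ∂μ, ENNReal.ofReal (x ^ 2 * (if x ≤ (i : ℝ) then 1 else 0))
        ≤ ENNReal.ofReal ((i : ℝ) ^ 2) := by
      filter_upwards [hae] with x hx
      apply ENNReal.ofReal_le_ofReal
      split_ifs with h
      · rw [mul_one]; exact pow_le_pow_left₀ hx h 2
      · rw [mul_zero]; positivity
    have := lintegral_mono_ae hbd
    rw [lintegral_const, measure_univ, mul_one] at this
    exact ne_top_of_le_ne_top ENNReal.ofReal_ne_top this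
  -- integrability of the products
  have habs1 : ∀ (i : ℕ) (ω : Ω), |Ysix X Δ b i ω / (i : ℝ)| ≤ 1 := by
    intro i ω
    rcases Nat.eq_zero_or_pos i with h0 | hpos
    · subst h0; simp
    · rw [abs_div, abs_of_nonneg (by positivity : (0:ℝ) ≤ (i:ℝ)),
        div_le_one (by exact_mod_cast hpos)]
      exact abs_Ysix_le hb hX0 i ω
  have hterm_meas : ∀ i : ℕ, Measurable (fun ω => Ysix X Δ b i ω / (i : ℝ)) :=
    fun i => (meas_Ysix i (hX i).comap_le (hΔ i).comap_le).div_const _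
  have hterm_int : ∀ i j : ℕ,
      Integrable (fun ω => (Ysix X Δ b i ω / (i : ℝ)) * (Ysix X Δ b j ω / (j : ℝ))) P := by
    intro i j
    refine Integrable.mono' (integrable_const (1:ℝ))
      (((hterm_meas i).mul (hterm_meas j)).aestronglyMeasurable)
      (ae_of_all _ fun ω => ?_)
    rw [Real.norm_eq_abs, abs_mul]
    exact mul_le_one₀ (habs1 i ω) (abs_nonneg _) (habs1 j ω)
  have hexp : (fun ω => (Ssix X Δ b n ω) ^ 2)
      = fun ω => ∑ i ∈ Finset.Icc 1 n, ∑ j ∈ Finset.Icc 1 n,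
          (Ysix X Δ b i ω / (i : ℝ)) * (Ysix X Δ b j ω / (j : ℝ)) := by
    funext ω
    rw [Ssix, sq, Finset.sum_mul_sum]
  have hsum1 : ∫ ω, (Ssix X Δ b n ω) ^ 2 ∂P
      = ∑ i ∈ Finset.Icc 1 n, ∑ j ∈ Finset.Icc 1 n,
          ∫ ω, (Ysix X Δ b i ω / (i : ℝ)) * (Ysix X Δ b j ω / (j : ℝ)) ∂P := by
    rw [hexp, integral_finset_sum _ (fun i _ => integrable_finset_sum _ (fun j _ => hterm_int i j))]
    exact Finset.sum_congr rfl fun i _ => integral_finset_sum _ (fun j _ => hterm_int i j)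
  have hcross : ∀ i ∈ Finset.Icc 1 n, ∀ j ∈ Finset.Icc 1 n, j ≠ i →
      ∫ ω, (Ysix X Δ b i ω / (i : ℝ)) * (Ysix X Δ b j ω / (j : ℝ)) ∂P = 0 := by
    intro i _ j _ hji
    have heq : (fun ω => (Ysix X Δ b i ω / (i : ℝ)) * (Ysix X Δ b j ω / (j : ℝ)))
        = fun ω => ((i : ℝ))⁻¹ * ((j : ℝ))⁻¹ * (Ysix X Δ b i ω * Ysix X Δ b j ω) := by
      funext ω; ring
    rw [heq]
    have : ∫ ω, ((i : ℝ))⁻¹ * ((j : ℝ))⁻¹ * (Ysix X Δ b i ω * Ysix X Δ b j ω) ∂P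
        = ((i : ℝ))⁻¹ * ((j : ℝ))⁻¹ * ∫ ω, Ysix X Δ b i ω * Ysix X Δ b j ω ∂P :=
      integral_const_mul _ _
    rw [this, cross_zero hb hX hΔ hX0 hΔindep hΔp hIndepXΔ (Ne.symm hji), mul_zero]
  have hsum2 : ∫ ω, (Ssix X Δ b n ω) ^ 2 ∂P
      = ∑ i ∈ Finset.Icc 1 n,
          ∫ ω, (Ysix X Δ b i ω / (i : ℝ)) * (Ysix X Δ b i ω / (i : ℝ)) ∂P := by
    rw [hsum1]
    refine Finset.sum_congr rfl fun i hi => ?_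
    exact Finset.sum_eq_single_of_mem i hi (fun j hj hji => hcross i hi j hj hji)
  have hdiag : ∀ i ∈ Finset.Icc 1 n,
      ∫ ω, (Ysix X Δ b i ω / (i : ℝ)) * (Ysix X Δ b i ω / (i : ℝ)) ∂P
        ≤ (((i : ℝ)) ^ 2)⁻¹ * (b * (I i).toReal) := by
    intro i hi
    simp only [Finset.mem_Icc] at hi
    obtain ⟨k, rfl⟩ : ∃ k, i = k + 1 := ⟨i - 1, by omega⟩
    have heq : (fun ω => (Ysix X Δ b (k+1) ω / ((k+1 : ℕ) : ℝ))
        * (Ysix X Δ b (k+1) ω / ((k+1 : ℕ) : ℝ)))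
        = fun ω => ((((k+1 : ℕ) : ℝ)) ^ 2)⁻¹ * (Ysix X Δ b (k+1) ω) ^ 2 := by
      funext ω
      have : ((k+1 : ℕ) : ℝ) ≠ 0 := by positivity
      field_simp
    rw [heq]
    have h2 : ∫ ω, ((((k+1 : ℕ) : ℝ)) ^ 2)⁻¹ * (Ysix X Δ b (k+1) ω) ^ 2 ∂P
        = ((((k+1 : ℕ) : ℝ)) ^ 2)⁻¹ * ∫ ω, (Ysix X Δ b (k+1) ω) ^ 2 ∂P :=
      integral_const_mul _ _
    rw [h2]
    apply mul_le_mul_of_nonneg_left _ (by positivity)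
    exact diag_bound hb hX hΔ hX0 hμ0 hcond k
  have hstep : ∫ ω, (Ssix X Δ b n ω) ^ 2 ∂P
      ≤ b * ∑ i ∈ Finset.Icc 1 n, (((i : ℝ)) ^ 2)⁻¹ * (I i).toReal := by
    rw [hsum2, Finset.mul_sum]
    refine Finset.sum_le_sum fun i hi => (hdiag i hi).trans ?_
    rw [← mul_assoc, mul_comm ((((i : ℝ)) ^ 2)⁻¹) b, mul_assoc]
  -- the ENNReal part
  have key : ∑ i ∈ Finset.Icc 1 n, (((i : ℝ)) ^ 2)⁻¹ * (I i).toReal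
      ≤ 2 * (∫⁻ x, ENNReal.ofReal x ∂μ).toReal := by
    have key1 : ∑ i ∈ Finset.Icc 1 n, (((i : ℝ)) ^ 2)⁻¹ * (I i).toReal
        = (∑ i ∈ Finset.Icc 1 n, ENNReal.ofReal ((((i : ℝ)) ^ 2)⁻¹) * I i).toReal := by
      rw [ENNReal.toReal_sum (fun i _ => ENNReal.mul_ne_top ENNReal.ofReal_ne_top (hIfin i))]
      refine Finset.sum_congr rfl fun i _ => ?_
      rw [ENNReal.toReal_mul, ENNReal.toReal_ofReal (by positivity)]
    have key2 : ∑ i ∈ Finset.Icc 1 n, ENNReal.ofReal ((((i : ℝ)) ^ 2)⁻¹) * I i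
        ≤ ENNReal.ofReal 2 * ∫⁻ x, ENNReal.ofReal x ∂μ := by
      have hlhs : ∑ i ∈ Finset.Icc 1 n, ENNReal.ofReal ((((i : ℝ)) ^ 2)⁻¹) * I i
          = ∫⁻ x, ∑ i ∈ Finset.Icc 1 n, ENNReal.ofReal ((((i : ℝ)) ^ 2)⁻¹)
              * ENNReal.ofReal (x ^ 2 * (if x ≤ (i : ℝ) then 1 else 0)) ∂μ := by
        rw [lintegral_finset_sum _ (fun i _ => (hφmeas i).const_mul _)]
        refine Finset.sum_congr rfl fun i _ => ?_
        rw [lintegral_const_mul _ (hφmeas i)]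
      rw [hlhs]
      have hrhs : ∫⁻ x, ENNReal.ofReal (2 * x) ∂μ
          = ENNReal.ofReal 2 * ∫⁻ x, ENNReal.ofReal x ∂μ := by
        simp_rw [ENNReal.ofReal_mul (by norm_num : (0:ℝ) ≤ 2)]
        exact lintegral_const_mul _ ENNReal.measurable_ofReal
      rw [← hrhs]
      refine lintegral_mono_ae ?_
      filter_upwards [hae] with x hx
      have hptw : ∑ i ∈ Finset.Icc 1 n, ENNReal.ofReal ((((i : ℝ)) ^ 2)⁻¹)
          * ENNReal.ofReal (x ^ 2 * (if x ≤ (i : ℝ) then 1 else 0))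
          = ENNReal.ofReal (∑ i ∈ Finset.Icc 1 n,
              (((i : ℝ)) ^ 2)⁻¹ * (x ^ 2 * (if x ≤ (i : ℝ) then 1 else 0))) := by
        rw [ENNReal.ofReal_sum_of_nonneg (fun i _ => by positivity)]
        refine Finset.sum_congr rfl fun i _ => ?_
        exact (ENNReal.ofReal_mul (by positivity)).symm
      rw [hptw]
      exact ENNReal.ofReal_le_ofReal (sum_sq_trunc_le x hx n)
    rw [key1]
    calc (∑ i ∈ Finset.Icc 1 n, ENNReal.ofReal ((((i : ℝ)) ^ 2)⁻¹) * I i).toReal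
        ≤ (ENNReal.ofReal 2 * ∫⁻ x, ENNReal.ofReal x ∂μ).toReal :=
        ENNReal.toReal_mono (ENNReal.mul_ne_top ENNReal.ofReal_ne_top hμm.ne) key2
    _ = 2 * (∫⁻ x, ENNReal.ofReal x ∂μ).toReal := by
        rw [ENNReal.toReal_mul, ENNReal.toReal_ofReal (by norm_num : (0:ℝ) ≤ 2)]
  calc ∫ ω, (Ssix X Δ b n ω) ^ 2 ∂P
      ≤ b * ∑ i ∈ Finset.Icc 1 n, (((i : ℝ)) ^ 2)⁻¹ * (I i).toReal := hstep
  _ ≤ b * (2 * (∫⁻ x, ENNReal.ofReal x ∂μ).toReal) := mul_le_mul_of_nonneg_left key hb0.le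
  _ = 2 * b * (∫⁻ x, ENNReal.ofReal x ∂μ).toReal := by ring

lemma abs_Ssix_le (hb : 1 ≤ b) (hX0 : ∀ n ω, 0 ≤ X n ω) (n : ℕ) (ω : Ω) :
    |Ssix X Δ b n ω| ≤ (n : ℝ) := by
  have habs1 : ∀ (i : ℕ), |Ysix X Δ b i ω / (i : ℝ)| ≤ 1 := by
    intro i
    rcases Nat.eq_zero_or_pos i with h0 | hpos
    · subst h0; simp
    · rw [abs_div, abs_of_nonneg (by positivity : (0:ℝ) ≤ (i:ℝ)),
        div_le_one (by exact_mod_cast hpos)]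
      exact abs_Ysix_le hb hX0 i ω
  calc |Ssix X Δ b n ω| ≤ ∑ i ∈ Finset.Icc 1 n, |Ysix X Δ b i ω / (i : ℝ)| := by
        rw [Ssix]; exact Finset.abs_sum_le_sum_abs _ _
  _ ≤ ∑ _i ∈ Finset.Icc 1 n, (1 : ℝ) := Finset.sum_le_sum fun i _ => habs1 i
  _ = (n : ℝ) := by simp

lemma eLpNorm_Ssix_le {μ : Measure ℝ} [IsProbabilityMeasure μ] (hb : 1 ≤ b)
    (hX : ∀ n, Measurable (X n)) (hΔ : ∀ i, Measurable (Δ i)) (hX0 : ∀ n ω, 0 ≤ X n ω)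
    (hμ0 : μ (Set.Iio 0) = 0) (hμm : (∫⁻ x, ENNReal.ofReal x ∂μ) < ⊤)
    (hcond : ∀ n : ℕ, ∀ s : Set ℝ, MeasurableSet s →
        ∀ᵐ ω ∂P,
          (P[fun ω' => s.indicator (fun _ => (1 : ℝ)) (X (n + 1) ω') |
            ⨆ i : Fin n, MeasurableSpace.comap (X ((i : ℕ) + 1)) inferInstance]) ω ≤
            b * (μ s).toReal)
    (hΔindep : iIndepFun Δ P)
    (hΔp : ∀ i, P {ω | Δ i ω = true} = ENNReal.ofReal (1 - b⁻¹))
    (hIndepXΔ : IndepFun (fun ω => (fun i => Δ i ω)) (fun ω => (fun n => X n ω)) P)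
    (n : ℕ) :
    eLpNorm (Ssix X Δ b n) 1 P
      ≤ ENNReal.ofReal (1 + 2 * b * (∫⁻ x, ENNReal.ofReal x ∂μ).toReal) := by
  have hSint : Integrable (Ssix X Δ b n) P := integrable_Ssix hb hX hΔ hX0 n
  have hS2int : Integrable (fun ω => (Ssix X Δ b n ω) ^ 2) P := by
    refine Integrable.mono' (integrable_const ((n:ℝ) ^ 2))
      (((meas_Ssix (b := b) n).mono (Gsix_le hX hΔ n) le_rfl).pow_const 2).aestronglyMeasurable
      (ae_of_all _ fun ω => ?_)
    rw [Real.norm_eq_abs, abs_pow]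
    exact pow_le_pow_left₀ (abs_nonneg _) (abs_Ssix_le hb hX0 n ω) 2
  have h1 : eLpNorm (Ssix X Δ b n) 1 P = ENNReal.ofReal (∫ ω, ‖Ssix X Δ b n ω‖ ∂P) := by
    rw [eLpNorm_one_eq_lintegral_enorm, ← ofReal_integral_norm_eq_lintegral_enorm hSint]
  rw [h1]
  apply ENNReal.ofReal_le_ofReal
  have h2 : ∫ ω, ‖Ssix X Δ b n ω‖ ∂P ≤ ∫ ω, (1 + (Ssix X Δ b n ω) ^ 2) ∂P := by
    refine integral_mono hSint.norm ((integrable_const (1:ℝ)).add hS2int) fun ω => ?_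
    rw [Real.norm_eq_abs]
    nlinarith [sq_abs (Ssix X Δ b n ω), sq_nonneg (|Ssix X Δ b n ω| - 1), abs_nonneg (Ssix X Δ b n ω)]
  refine h2.trans ?_
  rw [integral_add (integrable_const (1:ℝ)) hS2int, integral_const, probReal_univ,
    one_smul]
  have := l2_bound hb hX hΔ hX0 hμ0 hμm hcond hΔindep hΔp hIndepXΔ n
  linarith


/-- with `X_i ≥ 0` whose conditional laws given the past have density `≤ b`
w.r.t. a probability measure `μ` on `[0,∞)` with finite mean, and `Δ̃_i` iid
Bernoulli(1 - b⁻¹) independent of the `X`'s, the sums `Σ_{i≤n} Y_i/i` form an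
`L²`-bounded martingale with `E(Σ Y_i/i)² ≤ C m_μ`, and `(1/n) Σ_{i≤n} Y_i → 0` a.s. -/
theorem stmt6 (b : ℝ) (hb : 1 ≤ b) :
    ∃ C : ℝ, 0 < C ∧
    ∀ (Ω : Type) (_ : MeasurableSpace Ω) (P : Measure Ω), IsProbabilityMeasure P →
    ∀ (X : ℕ → Ω → ℝ), (∀ n, Measurable (X n)) → (∀ n ω, 0 ≤ X n ω) →
    ∀ (μ : Measure ℝ), IsProbabilityMeasure μ → μ (Set.Iio 0) = 0 →
      (∫⁻ x, ENNReal.ofReal x ∂μ) < ⊤ →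
      (∀ n : ℕ, ∀ s : Set ℝ, MeasurableSet s →
        ∀ᵐ ω ∂P,
          (P[fun ω' => s.indicator (fun _ => (1 : ℝ)) (X (n + 1) ω') |
            ⨆ i : Fin n, MeasurableSpace.comap (X ((i : ℕ) + 1)) inferInstance]) ω ≤
            b * (μ s).toReal) →
    ∀ (Δ : ℕ → Ω → Bool), (∀ i, Measurable (Δ i)) →
      iIndepFun Δ P →
      (∀ i, P {ω | Δ i ω = true} = ENNReal.ofReal (1 - b⁻¹)) →
      IndepFun (fun ω => (fun i => Δ i ω)) (fun ω => (fun n => X n ω)) P →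
      (∀ n, Measurable[Gsix X Δ n] (Ssix X Δ b n)) ∧
      (∀ n, Ssix X Δ b n =ᵐ[P] P[Ssix X Δ b (n + 1) | Gsix X Δ n]) ∧
      (∀ n, ∫ ω, (Ssix X Δ b n ω) ^ 2 ∂P ≤ C * (∫⁻ x, ENNReal.ofReal x ∂μ).toReal) ∧
      (∀ᵐ ω ∂P, Filter.Tendsto
        (fun n : ℕ => (∑ i ∈ Finset.Icc 1 n, Ysix X Δ b i ω) / (n : ℝ))
        Filter.atTop (nhds 0)) := by

  refine ⟨2 * b, by linarith, ?_⟩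
  intro Ω mΩ P hP X hX hX0 μ hμ hμ0 hμm hcond Δ hΔ hΔindep hΔp hIndepXΔ
  haveI := hP
  haveI := hμ
  refine ⟨fun n => meas_Ssix n,
    fun n => martprop hb hX hΔ hX0 hΔindep hΔp hIndepXΔ n,
    fun n => l2_bound hb hX hΔ hX0 hμ0 hμm hcond hΔindep hΔp hIndepXΔ n, ?_⟩
  -- a.s. convergence
  set ℱ : Filtration ℕ mΩ := ⟨fun n => Gsix X Δ n, Gsix_mono, Gsix_le hX hΔ⟩ with hℱ
  have hadp : StronglyAdapted ℱ (Ssix X Δ b) := fun n => (meas_Ssix n).stronglyMeasurable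
  have hmart : Martingale (Ssix X Δ b) ℱ P :=
    martingale_nat hadp (fun n => integrable_Ssix hb hX hΔ hX0 n)
      (fun n => martprop hb hX hΔ hX0 hΔindep hΔp hIndepXΔ n)
  have hbdd : ∀ n, eLpNorm (Ssix X Δ b n) 1 P
      ≤ ENNReal.ofReal (1 + 2 * b * (∫⁻ x, ENNReal.ofReal x ∂μ).toReal) :=
    fun n => eLpNorm_Ssix_le hb hX hΔ hX0 hμ0 hμm hcond hΔindep hΔp hIndepXΔ n
  have hconv : ∀ᵐ ω ∂P, ∃ c, Tendsto (fun n => Ssix X Δ b n ω) atTop (nhds c) :=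
    hmart.submartingale.exists_ae_tendsto_of_bdd hbdd
  filter_upwards [hconv] with ω hω
  obtain ⟨c, hc⟩ := hω
  exact kronecker_aux (fun i => Ysix X Δ b i ω) c hc
end Main
end
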